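/- arXiv:2507.19047 — 5 statements merged into one kernel-verified Lean document; each statement's English description precedes it below -/
import Mathlib

section
/- For every positive integer d and every nonnegative integer n, a_d(n) equals the number of partitions of n + T_d into exactly d parts whose Durfee triangle has size d. -/
/-- `triangleFits s k`: the right-angled isosceles triangle of size `k` fits into the
Ferrers board of the partition with parts `s`, i.e. the `j`-th largest part is
`> k - j` (equivalently `≥ k - j + 1`) for all `j ∈ {1, …, k}`. -/
def triangleFits (s : Multiset ℕ) (k : ℕ) : Prop :=
  ∀ j ∈ Finset.Icc 1 k, j ≤ Multiset.card (s.filter fun x => k + 1 - j ≤ x)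

instance (s : Multiset ℕ) : DecidablePred (triangleFits s) := fun k => by
  unfold triangleFits; infer_instance

/-- The size of the Durfee triangle: the largest `k` such that the triangle of size `k` fits. -/
def durfeeTriangleSize (s : Multiset ℕ) : ℕ :=
  Nat.findGreatest (triangleFits s) (Multiset.card s)

/-- `R k n`: the number of partitions of `n` whose Durfee triangle has size `k`. -/
def R (k n : ℕ) : ℕ :=
  Finset.card (Finset.univ.filter fun p : Nat.Partition n => durfeeTriangleSize p.parts = k)
/-- `a d n`: the number of tuples `(k₁, …, k_d)` of nonnegative integers summing to `n`
with `k_{j} ≤ k_{j-1} + 1` for `j ∈ {2, …, d}`. -/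
def a (d n : ℕ) : ℕ :=
  Finset.card ((Finset.univ : Finset (Fin d → Fin (n + 1))).filter fun t =>
    (∑ i, (t i : ℕ)) = n ∧
    ∀ i : Fin d, ∀ h : i.val + 1 < d, (t ⟨i.val + 1, h⟩ : ℕ) ≤ (t i : ℕ) + 1)


/-! Sort the parts of a partition of `n + T_d` into `d` parts as `λ₁ ≥ ⋯ ≥ λ_d`. Its Durfee
triangle has size `d` exactly when the staircase `(d, d - 1, …, 1)` fits under it, i.e.
`λ_j ≥ d + 1 - j`. Subtracting the staircase, `k_j = λ_j - (d + 1 - j)`, is then a bijection onto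
the tuples counted by `a_d(n)`: the ordering `λ_j ≤ λ_{j-1}` becomes `k_j ≤ k_{j-1} + 1`. -/

open Finset

theorem Fin.antitone_iff_forall_mk_succ_le {α : Type*} [Preorder α] {d : ℕ} {f : Fin d → α} :
    Antitone f ↔ ∀ i : Fin d, ∀ h : i.val + 1 < d, f ⟨i.val + 1, h⟩ ≤ f i := by
  cases d with
  | zero => exact ⟨fun _ i => i.elim0, fun _ i => i.elim0⟩
  | succ d =>
    rw [Fin.antitone_iff_succ_le]
    exact ⟨fun hf i h => hf ⟨i, by omega⟩, fun hf i => hf i.castSucc (by simp)⟩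

theorem sum_staircase (d : ℕ) : ∑ i : Fin d, (d - i : ℕ) = d * (d + 1) / 2 := by
  have gauss := sum_range_id (d + 1)
  rw [Nat.add_sub_cancel, sum_range_succ'] at gauss
  rw [Fin.sum_univ_eq_sum_range (fun i => d - i), ← sum_range_reflect, Nat.mul_comm, ← gauss]
  exact sum_congr rfl fun i hi => by simp at hi; omega

theorem antitone_add_staircase_iff {d : ℕ} (t : Fin d → ℕ) :
    Antitone (fun i : Fin d => t i + (d - i)) ↔
      ∀ i : Fin d, ∀ h : i.val + 1 < d, t ⟨i.val + 1, h⟩ ≤ t i + 1 := by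
  rw [Fin.antitone_iff_forall_mk_succ_le]
  exact forall₂_congr fun i h => by dsimp only; omega

theorem Multiset.card_filter_coe_ofFn {α : Type*} {d : ℕ} (g : Fin d → α) (p : α → Prop)
    [DecidablePred p] : card ((List.ofFn g : Multiset α).filter p) = #{i | p (g i)} := by
  rw [List.ofFn_eq_map, ← Multiset.map_coe, Multiset.filter_map, Multiset.card_map]
  rfl

theorem triangleFits_iff_forall_fin {s : Multiset ℕ} {d : ℕ} :
    triangleFits s d ↔ ∀ i : Fin d, i.val + 1 ≤ Multiset.card (s.filter (d - i ≤ ·)) := by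
  refine ⟨fun h i => ?_, fun h j hj => ?_⟩
  · simpa [show d + 1 - (i + 1) = d - i by omega] using h (i + 1) (mem_Icc.mpr ⟨by omega, i.isLt⟩)
  · obtain ⟨hj1, hjd⟩ := mem_Icc.mp hj
    simpa [show j - 1 + 1 = j by omega, show d - (j - 1) = d + 1 - j by omega]
      using h ⟨j - 1, by omega⟩

theorem triangleFits_coe_ofFn_iff {d : ℕ} {g : Fin d → ℕ} (hg : Antitone g) :
    triangleFits (List.ofFn g : Multiset ℕ) d ↔ ∀ i : Fin d, d - i ≤ g i := by
  simp only [triangleFits_iff_forall_fin, Multiset.card_filter_coe_ofFn]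
  refine ⟨fun h i => ?_, fun h i => ?_⟩
  · by_contra! hi
    -- antitonicity confines the parts `≥ d - i` to the indices `< i`
    have hsub : ({k | d - i ≤ g k} : Finset (Fin d)) ⊆ Iio i := fun k hk => by
      simp only [mem_filter, mem_univ, true_and] at hk
      refine mem_Iio.mpr (lt_of_not_ge fun hik => ?_)
      have := hg hik
      omega
    have hcard := card_le_card hsub
    rw [Fin.card_Iio] at hcard
    have := h i
    omega
  · calc i.val + 1 = #(Iic i) := (Fin.card_Iic i).symm
      _ ≤ _ := card_le_card fun k hk => by
        have := h k
        have : k ≤ i := Finset.mem_Iic.mp hk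
        simp only [mem_filter, mem_univ, true_and]
        omega

theorem durfeeTriangleSize_eq_iff_triangleFits {s : Multiset ℕ} {d : ℕ}
    (hs : Multiset.card s = d) : durfeeTriangleSize s = d ↔ triangleFits s d := by
  subst hs
  refine ⟨fun h => ?_, Nat.findGreatest_eq⟩
  have := Nat.findGreatest_spec (P := triangleFits s) (Nat.zero_le (Multiset.card s))
    (by simp [triangleFits])
  rwa [← durfeeTriangleSize, h] at this

theorem durfeeTriangleSize_coe_ofFn_eq_iff {d : ℕ} {g : Fin d → ℕ} (hg : Antitone g) :
    durfeeTriangleSize (List.ofFn g : Multiset ℕ) = d ↔ ∀ i : Fin d, d - i ≤ g i := by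
  rw [durfeeTriangleSize_eq_iff_triangleFits (by simp), triangleFits_coe_ofFn_iff hg]

def sortedParts (s : Multiset ℕ) (d : ℕ) : Fin d → ℕ :=
  fun i => (s.sort (· ≥ ·)).getD i 0

section sortedParts

variable {s : Multiset ℕ} {d : ℕ}

theorem ofFn_sortedParts (hs : Multiset.card s = d) :
    List.ofFn (sortedParts s d) = s.sort (· ≥ ·) := by
  subst hs
  refine List.ext_getElem (by simp) fun k _ hk => ?_
  rw [List.getElem_ofFn]
  exact List.getD_eq_getElem _ _ hk

theorem coe_ofFn_sortedParts (hs : Multiset.card s = d) :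
    (List.ofFn (sortedParts s d) : Multiset ℕ) = s := by
  rw [ofFn_sortedParts hs, Multiset.sort_eq]

theorem antitone_sortedParts (hs : Multiset.card s = d) : Antitone (sortedParts s d) := by
  rw [← List.sortedGE_ofFn_iff, ofFn_sortedParts hs, List.sortedGE_iff_pairwise]
  exact Multiset.pairwise_sort _ _

theorem sortedParts_coe_ofFn {g : Fin d → ℕ} (hg : Antitone g) :
    sortedParts (List.ofFn g : Multiset ℕ) d = g := by
  have hsort : (List.ofFn g : Multiset ℕ).sort (· ≥ ·) = List.ofFn g :=
    List.mergeSort_eq_self _ hg.sortedGE_ofFn.pairwise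
  funext i
  simp [sortedParts, hsort]

end sortedParts

theorem staircase_le_sortedParts {s : Multiset ℕ} {d : ℕ} (hcard : Multiset.card s = d)
    (hdurfee : durfeeTriangleSize s = d) (i : Fin d) : d - i ≤ sortedParts s d i := by
  rw [← coe_ofFn_sortedParts hcard] at hdurfee
  exact (durfeeTriangleSize_coe_ofFn_eq_iff (antitone_sortedParts hcard)).mp hdurfee i

section Staircase

variable {d n : ℕ}

def addStaircase (t : Fin d → ℕ) (ht : ∑ i, t i = n) : Nat.Partition (n + d * (d + 1) / 2) where
  parts := List.ofFn fun i : Fin d => t i + (d - i)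
  parts_pos := by
    simp only [Multiset.mem_coe, List.mem_ofFn]
    rintro _ ⟨i, rfl⟩
    have := i.isLt
    omega
  parts_sum := by rw [Multiset.sum_coe, List.sum_ofFn, sum_add_distrib, ht, sum_staircase]

/-- The reduction mod `n + 1` is harmless on the partitions of interest, see
`val_removeStaircase`. -/
def removeStaircase (p : Nat.Partition (n + d * (d + 1) / 2)) (i : Fin d) : Fin (n + 1) :=
  Fin.ofNat (n + 1) (sortedParts p.parts d i - (d - i))

theorem sum_sortedParts_sub_staircase (p : Nat.Partition (n + d * (d + 1) / 2))
    (hcard : Multiset.card p.parts = d) (hdurfee : durfeeTriangleSize p.parts = d) :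
    ∑ i, (sortedParts p.parts d i - (d - i)) = n := by
  have hsum : ∑ i, sortedParts p.parts d i = n + d * (d + 1) / 2 := by
    rw [← List.sum_ofFn, ← Multiset.sum_coe, coe_ofFn_sortedParts hcard, p.parts_sum]
  rw [sum_tsub_distrib _ fun i _ => staircase_le_sortedParts hcard hdurfee i, hsum,
    sum_staircase, Nat.add_sub_cancel]

theorem val_removeStaircase (p : Nat.Partition (n + d * (d + 1) / 2))
    (hcard : Multiset.card p.parts = d) (hdurfee : durfeeTriangleSize p.parts = d) (i : Fin d) :
    (removeStaircase p i : ℕ) = sortedParts p.parts d i - (d - i) := by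
  refine (Fin.val_ofNat _ _).trans (Nat.mod_eq_of_lt (Nat.lt_succ_of_le ?_))
  exact (single_le_sum (f := fun i => sortedParts p.parts d i - (d - i)) (by simp)
    (mem_univ i)).trans_eq (sum_sortedParts_sub_staircase p hcard hdurfee)

theorem addStaircase_mem {t : Fin d → ℕ} (ht : ∑ i, t i = n)
    (hstep : ∀ i : Fin d, ∀ h : i.val + 1 < d, t ⟨i.val + 1, h⟩ ≤ t i + 1) :
    Multiset.card (addStaircase t ht).parts = d ∧
      durfeeTriangleSize (addStaircase t ht).parts = d :=
  ⟨by simp [addStaircase], (durfeeTriangleSize_coe_ofFn_eq_iff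
    ((antitone_add_staircase_iff t).mpr hstep)).mpr fun _ => Nat.le_add_left _ _⟩

theorem removeStaircase_addStaircase {t : Fin d → Fin (n + 1)} (ht : ∑ i, (t i : ℕ) = n)
    (hstep : ∀ i : Fin d, ∀ h : i.val + 1 < d, (t ⟨i.val + 1, h⟩ : ℕ) ≤ t i + 1) :
    removeStaircase (addStaircase (fun i => t i) ht) = t := by
  funext i
  simp [removeStaircase, addStaircase,
    sortedParts_coe_ofFn ((antitone_add_staircase_iff (fun i => (t i : ℕ))).mpr hstep)]

theorem addStaircase_removeStaircase (p : Nat.Partition (n + d * (d + 1) / 2))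
    (hcard : Multiset.card p.parts = d) (hdurfee : durfeeTriangleSize p.parts = d)
    (ht : ∑ i, (removeStaircase p i : ℕ) = n) :
    addStaircase (fun i => removeStaircase p i) ht = p := by
  refine Nat.Partition.ext ?_
  simp only [addStaircase, val_removeStaircase p hcard hdurfee,
    Nat.sub_add_cancel (staircase_le_sortedParts hcard hdurfee _)]
  exact coe_ofFn_sortedParts hcard

theorem removeStaircase_mem (p : Nat.Partition (n + d * (d + 1) / 2))
    (hcard : Multiset.card p.parts = d) (hdurfee : durfeeTriangleSize p.parts = d) :
    ∑ i, (removeStaircase p i : ℕ) = n ∧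
      ∀ i : Fin d, ∀ h : i.val + 1 < d,
        (removeStaircase p ⟨i.val + 1, h⟩ : ℕ) ≤ removeStaircase p i + 1 := by
  simp only [val_removeStaircase p hcard hdurfee]
  refine ⟨sum_sortedParts_sub_staircase p hcard hdurfee, (antitone_add_staircase_iff
    (fun i => sortedParts p.parts d i - (d - i))).mp ?_⟩
  convert antitone_sortedParts hcard using 1
  funext i
  exact Nat.sub_add_cancel (staircase_le_sortedParts hcard hdurfee i)

end Staircase

theorem a_eq_partitions_with_durfee_general (d n : ℕ) :
    a d n = Finset.card
      ((Finset.univ : Finset (Nat.Partition (n + d * (d + 1) / 2))).filter fun p =>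
        Multiset.card p.parts = d ∧ durfeeTriangleSize p.parts = d) := by
  refine card_bij' (fun t ht => addStaircase (fun i => t i) (mem_filter.mp ht).2.1)
    (fun p _ => removeStaircase p) ?_ ?_ ?_ ?_
  · intro t ht
    exact mem_filter.mpr ⟨mem_univ _, addStaircase_mem _ (mem_filter.mp ht).2.2⟩
  · intro p hp
    obtain ⟨hcard, hdurfee⟩ := (mem_filter.mp hp).2
    exact mem_filter.mpr ⟨mem_univ _, removeStaircase_mem p hcard hdurfee⟩
  · intro t ht
    exact removeStaircase_addStaircase _ (mem_filter.mp ht).2.2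
  · intro p hp
    obtain ⟨hcard, hdurfee⟩ := (mem_filter.mp hp).2
    exact addStaircase_removeStaircase p hcard hdurfee _

/-- **Lemma.** For positive `d` and `n ≥ 0`, `a_d(n)` equals the number of partitions
of `n + T_d` into exactly `d` parts whose Durfee triangle has size `d`. -/
theorem a_eq_partitions_with_durfee (d n : ℕ) (hd : 0 < d) :
    a d n = Finset.card
      ((Finset.univ : Finset (Nat.Partition (n + d * (d + 1) / 2))).filter fun p =>
        Multiset.card p.parts = d ∧ durfeeTriangleSize p.parts = d) :=
  a_eq_partitions_with_durfee_general d n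
end

section
/- For every positive integer d there exists a polynomial α_d ∈ ℤ[q] with constant coefficient 1, with degree exactly (d−1)d, and with the coefficient of q^{(d−1)d} equal to (−1)^{d−1}, such that the identity of formal power series A_d(q) · (q;q)_d = α_d(q) holds. -/
/-- `A d` is the generating function of `a d`. -/
noncomputable def A (d : ℕ) : PowerSeries ℤ := PowerSeries.mk fun n => (a d n : ℤ)

/-- The `q`-Pochhammer symbol `(q;q)_k = ∏_{r=1}^k (1 - q^r)` as a polynomial over `ℤ`. -/
noncomputable def qPochPoly (k : ℕ) : Polynomial ℤ :=
  ∏ r ∈ Finset.Icc 1 k, (1 - Polynomial.X ^ r)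

/-!
Let `H_{d,j}(q) = ∑ q^(k₀ + ⋯ + k_d + j k_d)`, summed over the tuples `(k₀, …, k_d)` with ascents
at most one, so that `A_{d+1} = H_{d,0}`. Split such a tuple of length `d + 2` as `(u, c)` with
`c ≤ u_d + 1`. The tuples with `c = 0` give `H_{d,0}`; lowering `c` by one matches those with
`c > 0` with those with `c ≤ u_d`, at weight cost `q^(j+1)`; the tuples with `c = u_d + 1` give
`q^(j+1) H_{d,j+1}`. Comparing the splittings by `c = 0` and by `c ≤ u_d` gives
`H_{d+1,j} (1 - q^(j+1)) = H_{d,0} - q^(2j+2) H_{d,j+1}`, while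
`H_{0,j} = 1 / (1 - q^(j+1))`.

Multiplying by `(q^(j+2); q)_(d+1) = [j+d+2 choose j+1]_q (q; q)_(d+1)`, induction on `d` shows that
`β_{d,j} = H_{d,j} (q^(j+1); q)_(d+1)` is the polynomial given by
`β_{d+1,j} = β_{d,0} [j+d+2 choose j+1]_q - q^(2j+2) β_{d,j+1}`. The second term has the larger
degree, so `β_{d,j}` has degree `d(d+1) + 2dj`, leading coefficient `(-1)^d` and constant term `1`;
`α_{d+1} = β_{d,0}`.
-/

open Polynomial

-- An infinite fibre would contribute the junk value `Set.ncard = 0`.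
noncomputable def genFun {α : Type*} (s : Set α) (w : α → ℕ) : PowerSeries ℤ :=
  PowerSeries.mk fun n => ({x ∈ s | w x = n}.ncard : ℤ)

section genFun

variable {α β : Type*}

theorem genFun_singleton (x : α) (w : α → ℕ) : genFun {x} w = PowerSeries.X ^ w x := by
  ext n
  rw [genFun, PowerSeries.coeff_mk, PowerSeries.coeff_X_pow]
  split_ifs with h
  · rw [show {y ∈ ({x} : Set α) | w y = n} = {x} by ext; simp +contextual [h]]
    simp
  · rw [show {y ∈ ({x} : Set α) | w y = n} = ∅ by ext; simp +contextual [Ne.symm h]]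
    simp

theorem genFun_eq_sep_add_sep {s : Set α} {w : α → ℕ} (hs : ∀ n, {x ∈ s | w x = n}.Finite)
    (p : α → Prop) :
    genFun s w = genFun {x ∈ s | p x} w + genFun {x ∈ s | ¬p x} w := by
  ext n
  simp only [genFun, PowerSeries.coeff_mk, map_add]
  rw [← Set.ncard_inter_add_ncard_sdiff_eq_ncard _ {x | p x} (hs n)]
  push_cast
  congr 3 <;> ext x <;> simp only [Set.mem_ofPred_eq, Set.mem_inter_iff, Set.mem_sdiff] <;> tauto

theorem genFun_of_bijOn {f : α → β} {s : Set α} {t : Set β} (hf : Set.BijOn f s t)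
    {w : α → ℕ} {w' : β → ℕ} (k : ℕ) (hw : ∀ x ∈ s, w' (f x) = w x + k) :
    genFun t w' = PowerSeries.X ^ k * genFun s w := by
  ext n
  rw [PowerSeries.coeff_X_pow_mul']
  simp only [genFun, PowerSeries.coeff_mk]
  split_ifs with hkn
  · have hfiber : Set.BijOn f {x ∈ s | w x = n - k} {y ∈ t | w' y = n} := by
      refine ⟨fun x hx => ⟨hf.mapsTo hx.1, ?_⟩, hf.injOn.mono fun x hx => hx.1, fun y hy => ?_⟩
      · rw [hw x hx.1, hx.2]; omega
      · obtain ⟨x, hx, rfl⟩ := hf.surjOn hy.1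
        exact ⟨x, ⟨hx, by have := hw x hx; have := hy.2; omega⟩, rfl⟩
    rw [hfiber.ncard_eq]
  · suffices {y ∈ t | w' y = n} = ∅ by simp [this]
    refine Set.eq_empty_of_forall_notMem fun y hy => ?_
    obtain ⟨x, hx, rfl⟩ := hf.surjOn hy.1
    have := hw x hx
    have := hy.2
    omega

end genFun

theorem finite_setOf_sum_le {ι : Type*} [Fintype ι] (n : ℕ) :
    {t : ι → ℕ | ∑ i, t i ≤ n}.Finite :=
  (Set.Finite.pi fun _ => Set.finite_Iic n).subset fun t ht i _ =>
    (Finset.single_le_sum (fun i _ => Nat.zero_le (t i)) (Finset.mem_univ i)).trans ht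

def ascentLeOne (d : ℕ) : Set (Fin (d + 1) → ℕ) :=
  {t | ∀ i : Fin d, t i.succ ≤ t i.castSucc + 1}

def ascentWeight {d : ℕ} (j : ℕ) (t : Fin (d + 1) → ℕ) : ℕ := ∑ i, t i + j * t (Fin.last d)

noncomputable def ascentSeries (d j : ℕ) : PowerSeries ℤ :=
  genFun (ascentLeOne d) (ascentWeight j)

theorem finite_ascentWeight_fiber {d : ℕ} (s : Set (Fin (d + 1) → ℕ)) (j n : ℕ) :
    {t ∈ s | ascentWeight j t = n}.Finite :=
  (finite_setOf_sum_le n).subset fun t ht => by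
    have := ht.2
    simp only [ascentWeight, Set.mem_ofPred_eq] at this ⊢
    omega

theorem ascentSeries_zero_mul (j : ℕ) :
    ascentSeries 0 j * (1 - PowerSeries.X ^ (j + 1)) = 1 := by
  have hsplit := genFun_eq_sep_add_sep (finite_ascentWeight_fiber (ascentLeOne 0) j)
    fun t => t 0 = 0
  have hzero : {t ∈ ascentLeOne 0 | t 0 = 0} = {0} := by
    ext t; simp [ascentLeOne, funext_iff, Fin.forall_fin_one]
  have hpos : genFun {t ∈ ascentLeOne 0 | ¬t 0 = 0} (ascentWeight j) =
      PowerSeries.X ^ (j + 1) * ascentSeries 0 j := by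
    have hbij : Set.BijOn (· + 1) (ascentLeOne 0) {t ∈ ascentLeOne 0 | ¬t 0 = 0} := by
      refine ⟨fun t _ => by simp [ascentLeOne], (add_left_injective 1).injOn,
        fun t ht => ⟨t - 1, by simp [ascentLeOne], _root_.funext fun i => ?_⟩⟩
      have := ht.2
      rw [Fin.fin_one_eq_zero i]
      simp only [Pi.add_apply, Pi.sub_apply, Pi.one_apply]
      omega
    refine genFun_of_bijOn hbij (j + 1) fun t _ => ?_
    simp only [ascentWeight, Fin.sum_univ_succ, Finset.univ_eq_empty, Finset.sum_empty,
      Fin.last_zero, Pi.add_apply, Pi.one_apply]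
    ring
  have hweight : ascentWeight j (0 : Fin 1 → ℕ) = 0 := by simp [ascentWeight]
  rw [← ascentSeries, hzero, genFun_singleton, hpos, hweight, pow_zero] at hsplit
  linear_combination hsplit

theorem snoc_mem_ascentLeOne_iff {d : ℕ} (u : Fin (d + 1) → ℕ) (c : ℕ) :
    Fin.snoc u c ∈ ascentLeOne (d + 1) ↔ u ∈ ascentLeOne d ∧ c ≤ u (Fin.last d) + 1 := by
  simp only [ascentLeOne, Set.mem_ofPred_eq, Fin.forall_fin_succ' (n := d), Fin.succ_castSucc,
    Fin.snoc_castSucc, Fin.succ_last, Fin.snoc_last]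

def ascentExtensions (d : ℕ) : Set ((Fin (d + 1) → ℕ) × ℕ) :=
  {p | p.1 ∈ ascentLeOne d ∧ p.2 ≤ p.1 (Fin.last d) + 1}

def extensionWeight {d : ℕ} (j : ℕ) (p : (Fin (d + 1) → ℕ) × ℕ) : ℕ :=
  ascentWeight 0 p.1 + (j + 1) * p.2

theorem ascentSeries_succ_eq_genFun (d j : ℕ) :
    ascentSeries (d + 1) j = genFun (ascentExtensions d) (extensionWeight j) := by
  have hbij : Set.BijOn (fun p => Fin.snoc p.1 p.2) (ascentExtensions d) (ascentLeOne (d + 1)) := by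
    refine ⟨fun p hp => (snoc_mem_ascentLeOne_iff _ _).2 hp,
      fun p _ q _ h => Prod.ext_iff.2 (Fin.snoc_injective2 h), fun t ht => ?_⟩
    rw [← Fin.snoc_init_self t, snoc_mem_ascentLeOne_iff] at ht
    exact ⟨(Fin.init t, t (Fin.last _)), ht, Fin.snoc_init_self t⟩
  rw [ascentSeries, genFun_of_bijOn hbij 0 fun p _ => ?_, pow_zero, one_mul]
  simp only [ascentWeight, extensionWeight, Fin.sum_univ_castSucc, Fin.snoc_castSucc,
    Fin.snoc_last, zero_mul, add_zero]
  ring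

theorem finite_extensionWeight_fiber {d : ℕ} (s : Set ((Fin (d + 1) → ℕ) × ℕ)) (j n : ℕ) :
    {p ∈ s | extensionWeight j p = n}.Finite := by
  refine ((finite_setOf_sum_le n).prod (Set.finite_Iic n)).subset fun p hp => ?_
  have := hp.2
  have : p.2 ≤ (j + 1) * p.2 := Nat.le_mul_of_pos_left _ j.succ_pos
  simp only [extensionWeight, ascentWeight, Set.mem_prod, Set.mem_ofPred_eq, Set.mem_Iic] at *
  omega

theorem genFun_ascentExtensions_snd_eq_zero (d j : ℕ) :
    genFun {p ∈ ascentExtensions d | p.2 = 0} (extensionWeight j) = ascentSeries d 0 := by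
  have hbij : Set.BijOn (fun u => (u, 0)) (ascentLeOne d) {p ∈ ascentExtensions d | p.2 = 0} :=
    ⟨fun u hu => ⟨⟨hu, Nat.zero_le _⟩, rfl⟩, fun u _ v _ h => congrArg Prod.fst h,
      fun p hp => ⟨p.1, hp.1.1, Prod.ext rfl hp.2.symm⟩⟩
  rw [genFun_of_bijOn hbij (w := ascentWeight 0) 0 fun u _ => by simp [extensionWeight],
    pow_zero, one_mul, ascentSeries]

theorem genFun_ascentExtensions_snd_ne_zero (d j : ℕ) :
    genFun {p ∈ ascentExtensions d | ¬p.2 = 0} (extensionWeight j) = PowerSeries.X ^ (j + 1) *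
      genFun {p ∈ ascentExtensions d | p.2 ≤ p.1 (Fin.last d)} (extensionWeight j) := by
  have hbij : Set.BijOn (fun p => (p.1, p.2 + 1))
      {p ∈ ascentExtensions d | p.2 ≤ p.1 (Fin.last d)} {p ∈ ascentExtensions d | ¬p.2 = 0} := by
    refine ⟨fun p hp => ⟨⟨hp.1.1, ?_⟩, p.2.succ_ne_zero⟩, fun p _ q _ h => ?_, fun p hp => ?_⟩
    · have := hp.2; dsimp only; omega
    · simpa [Prod.ext_iff] using h
    · have := hp.1.2; have := hp.2
      exact ⟨(p.1, p.2 - 1), ⟨⟨hp.1.1, by dsimp only; omega⟩, by dsimp only; omega⟩,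
        Prod.ext rfl (by dsimp only; omega)⟩
  exact genFun_of_bijOn hbij (j + 1) fun p _ => by simp only [extensionWeight]; ring

theorem genFun_ascentExtensions_snd_gt (d j : ℕ) :
    genFun {p ∈ ascentExtensions d | ¬p.2 ≤ p.1 (Fin.last d)} (extensionWeight j) =
      PowerSeries.X ^ (j + 1) * ascentSeries d (j + 1) := by
  have hbij : Set.BijOn (fun u => (u, u (Fin.last d) + 1)) (ascentLeOne d)
      {p ∈ ascentExtensions d | ¬p.2 ≤ p.1 (Fin.last d)} := by
    refine ⟨fun u hu => ⟨⟨hu, le_rfl⟩, by dsimp only; omega⟩,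
      fun u _ v _ h => congrArg Prod.fst h, fun p hp => ⟨p.1, hp.1.1, Prod.ext rfl ?_⟩⟩
    have := hp.1.2; have := hp.2; dsimp only; omega
  exact genFun_of_bijOn hbij (j + 1) fun u _ => by
    simp only [extensionWeight, ascentWeight]; ring

theorem ascentSeries_succ_mul (d j : ℕ) :
    ascentSeries (d + 1) j * (1 - PowerSeries.X ^ (j + 1)) =
      ascentSeries d 0 - PowerSeries.X ^ (2 * j + 2) * ascentSeries d (j + 1) := by
  have hfin := finite_extensionWeight_fiber (ascentExtensions d) j
  have hzero := genFun_eq_sep_add_sep hfin fun p => p.2 = 0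
  have hmax := genFun_eq_sep_add_sep hfin fun p => p.2 ≤ p.1 (Fin.last d)
  rw [genFun_ascentExtensions_snd_eq_zero, genFun_ascentExtensions_snd_ne_zero,
    ← ascentSeries_succ_eq_genFun] at hzero
  rw [genFun_ascentExtensions_snd_gt, ← ascentSeries_succ_eq_genFun] at hmax
  linear_combination hzero - PowerSeries.X ^ (j + 1) * hmax

theorem qPochPoly_succ (k : ℕ) : qPochPoly (k + 1) = qPochPoly k * (1 - X ^ (k + 1)) :=
  Finset.prod_Icc_succ_top (by omega) _

theorem qPochPoly_ne_zero (k : ℕ) : qPochPoly k ≠ 0 := by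
  refine Finset.prod_ne_zero_iff.2 fun r hr h => ?_
  have hr : r ≠ 0 := by have := (Finset.mem_Icc.1 hr).1; omega
  simpa [hr] using congrArg (eval 0) h

-- `(q^(j+1); q)_n`
noncomputable def qPochShift (j n : ℕ) : ℤ[X] := ∏ r ∈ Finset.range n, (1 - X ^ (j + 1 + r))

theorem qPochPoly_mul_qPochShift (j n : ℕ) :
    qPochPoly j * qPochShift j n = qPochPoly (j + n) := by
  induction n with
  | zero => simp [qPochShift]
  | succ n ih =>
    rw [qPochShift, Finset.prod_range_succ, ← mul_assoc, ← qPochShift, ih, ← add_assoc,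
      qPochPoly_succ, add_right_comm]

theorem qPochShift_zero_left (n : ℕ) : qPochShift 0 n = qPochPoly n := by
  simpa [qPochPoly] using qPochPoly_mul_qPochShift 0 n

theorem qPochShift_succ (j n : ℕ) :
    qPochShift j (n + 1) = (1 - X ^ (j + 1)) * qPochShift (j + 1) n := by
  rw [qPochShift, Finset.prod_range_succ', mul_comm, add_zero, qPochShift]
  congr 2 with r
  ring_nf

-- The Gaussian binomial coefficient `[k + l choose k]_q`, via the `q`-Pascal rule.
noncomputable def gaussBinom : ℕ → ℕ → ℤ[X]
  | 0, _ => 1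
  | _ + 1, 0 => 1
  | k + 1, l + 1 => gaussBinom k (l + 1) + X ^ (k + 1) * gaussBinom (k + 1) l

theorem gaussBinom_mul_qPochPoly_mul_qPochPoly :
    ∀ k l, gaussBinom k l * qPochPoly k * qPochPoly l = qPochPoly (k + l)
  | 0, l => by simp [gaussBinom, qPochPoly]
  | k + 1, 0 => by simp [gaussBinom, qPochPoly]
  | k + 1, l + 1 => by
    have h₁ := gaussBinom_mul_qPochPoly_mul_qPochPoly k (l + 1)
    have h₂ := gaussBinom_mul_qPochPoly_mul_qPochPoly (k + 1) l
    rw [show k + (l + 1) = k + l + 1 by omega, qPochPoly_succ l] at h₁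
    rw [show k + 1 + l = k + l + 1 by omega, qPochPoly_succ k] at h₂
    rw [show k + 1 + (l + 1) = k + l + 1 + 1 by omega, gaussBinom, qPochPoly_succ k,
      qPochPoly_succ l, qPochPoly_succ (k + l + 1)]
    linear_combination (1 - X ^ (k + 1)) * h₁ + X ^ (k + 1) * (1 - X ^ (l + 1)) * h₂

theorem qPochShift_eq_gaussBinom_mul (k l : ℕ) :
    qPochShift k l = gaussBinom k l * qPochPoly l := by
  refine mul_left_cancel₀ (qPochPoly_ne_zero k) ?_
  rw [qPochPoly_mul_qPochShift, ← gaussBinom_mul_qPochPoly_mul_qPochPoly]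
  ring

theorem gaussBinom_coeff_zero : ∀ k l, (gaussBinom k l).coeff 0 = 1
  | 0, _ => by simp [gaussBinom]
  | _ + 1, 0 => by simp [gaussBinom]
  | k + 1, l + 1 => by simp [gaussBinom, gaussBinom_coeff_zero k (l + 1), coeff_X_pow]

theorem gaussBinom_natDegree_le : ∀ k l, (gaussBinom k l).natDegree ≤ k * l
  | 0, _ => by simp [gaussBinom]
  | _ + 1, 0 => by simp [gaussBinom]
  | k + 1, l + 1 => by
    have h₁ := gaussBinom_natDegree_le k (l + 1)
    have h₂ := gaussBinom_natDegree_le (k + 1) l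
    rw [gaussBinom]
    refine (natDegree_add_le _ _).trans (max_le (h₁.trans ?_) (natDegree_mul_le.trans ?_))
    · nlinarith
    · rw [natDegree_X_pow]; nlinarith

noncomputable def ascentNumerator : ℕ → ℕ → ℤ[X]
  | 0, _ => 1
  | e + 1, j => ascentNumerator e 0 * gaussBinom (j + 1) (e + 1) -
      X ^ (2 * j + 2) * ascentNumerator e (j + 1)

theorem ascentSeries_mul_qPochShift : ∀ e j : ℕ,
    ascentSeries e j * qPochShift j (e + 1) = (ascentNumerator e j : PowerSeries ℤ)
  | 0, j => by simpa [ascentNumerator, qPochShift] using ascentSeries_zero_mul j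
  | e + 1, j => by
    have h₀ := ascentSeries_mul_qPochShift e 0
    have h₁ := ascentSeries_mul_qPochShift e (j + 1)
    rw [qPochShift_zero_left] at h₀
    rw [qPochShift_eq_gaussBinom_mul] at h₁
    rw [qPochShift_succ, qPochShift_eq_gaussBinom_mul, ascentNumerator]
    push_cast at h₁ ⊢
    rw [← h₀, ← h₁]
    linear_combination ((gaussBinom (j + 1) (e + 1) : PowerSeries ℤ) *
      (qPochPoly (e + 1) : PowerSeries ℤ)) * ascentSeries_succ_mul e j

theorem ascentNumerator_coeff_zero : ∀ e j : ℕ, (ascentNumerator e j).coeff 0 = 1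
  | 0, _ => by simp [ascentNumerator]
  | e + 1, j => by
    simp [ascentNumerator, ascentNumerator_coeff_zero e 0, gaussBinom_coeff_zero, coeff_X_pow]

theorem ascentNumerator_natDegree_and_leadingCoeff : ∀ e j : ℕ,
    (ascentNumerator e j).natDegree = e * (e + 1) + 2 * e * j ∧
      (ascentNumerator e j).leadingCoeff = (-1) ^ e
  | 0, _ => by simp [ascentNumerator]
  | e + 1, j => by
    obtain ⟨hdeg₀, -⟩ := ascentNumerator_natDegree_and_leadingCoeff e 0
    obtain ⟨hdeg, hlead⟩ := ascentNumerator_natDegree_and_leadingCoeff e (j + 1)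
    have hne : ascentNumerator e (j + 1) ≠ 0 := leadingCoeff_ne_zero.1 (by simp [hlead])
    have hdegX : (X ^ (2 * j + 2) * ascentNumerator e (j + 1)).natDegree =
        (e + 1) * (e + 1 + 1) + 2 * (e + 1) * j := by
      rw [natDegree_X_pow_mul _ hne, hdeg]; ring
    have hlt : (ascentNumerator e 0 * gaussBinom (j + 1) (e + 1)).natDegree <
        (X ^ (2 * j + 2) * ascentNumerator e (j + 1)).natDegree := by
      refine natDegree_mul_le.trans_lt ?_
      rw [hdeg₀, hdegX]
      nlinarith [gaussBinom_natDegree_le (j + 1) (e + 1)]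
    rw [ascentNumerator, natDegree_sub_eq_right_of_natDegree_lt hlt,
      leadingCoeff_sub_of_degree_lt' (degree_lt_degree hlt), leadingCoeff_mul, hlead, hdegX]
    simp [pow_succ]

theorem mem_ascentLeOne_iff {d : ℕ} (t : Fin (d + 1) → ℕ) :
    t ∈ ascentLeOne d ↔ ∀ i : Fin (d + 1), ∀ h : i.val + 1 < d + 1, t ⟨i.val + 1, h⟩ ≤ t i + 1 :=
  ⟨fun ht i h => ht ⟨i, by omega⟩, fun ht i => ht i.castSucc (by simp)⟩

theorem a_succ_eq_ncard (d n : ℕ) :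
    a (d + 1) n = {t ∈ ascentLeOne d | ascentWeight 0 t = n}.ncard := by
  rw [a, ← Set.ncard_coe_finset]
  refine Set.ncard_congr (fun t _ i => (t i : ℕ)) (fun t ht => ?_)
    (fun t _ u _ h => funext fun i => Fin.ext (congrFun h i)) fun u hu => ?_
  · simp only [Finset.coe_filter, Finset.mem_univ, true_and, Set.mem_ofPred_eq] at ht
    exact ⟨(mem_ascentLeOne_iff _).2 ht.2, by simpa [ascentWeight] using ht.1⟩
  · have hsum : ∑ i, u i = n := by simpa [ascentWeight] using hu.2
    have hle i : u i < n + 1 := Nat.lt_succ_of_le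
      (hsum ▸ Finset.single_le_sum (fun i _ => Nat.zero_le (u i)) (Finset.mem_univ i))
    refine ⟨fun i => ⟨u i, hle i⟩, ?_, rfl⟩
    simpa [hsum] using (mem_ascentLeOne_iff u).1 hu.1

theorem A_succ (d : ℕ) : A (d + 1) = ascentSeries d 0 := by
  ext n
  simp [A, ascentSeries, genFun, a_succ_eq_ncard]

/-- **Theorem.** For every positive integer `d` there is a polynomial `α_d ∈ ℤ[q]`
with constant coefficient `1`, degree exactly `(d-1)d`, leading coefficient
`(-1)^(d-1)`, such that `A_d(q) · (q;q)_d = α_d(q)` as formal power series. -/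
theorem Ad_gf (d : ℕ) (hd : 0 < d) :
    ∃ α : Polynomial ℤ,
      α.coeff 0 = 1 ∧
      α.natDegree = (d - 1) * d ∧
      α.coeff ((d - 1) * d) = (-1) ^ (d - 1) ∧
      A d * ((qPochPoly d : Polynomial ℤ) : PowerSeries ℤ) = ((α : Polynomial ℤ) : PowerSeries ℤ) := by
  obtain ⟨e, rfl⟩ : ∃ e, d = e + 1 := ⟨d - 1, by omega⟩
  obtain ⟨hdeg, hlead⟩ := ascentNumerator_natDegree_and_leadingCoeff e 0
  rw [mul_zero, add_zero] at hdeg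
  refine ⟨ascentNumerator e 0, ascentNumerator_coeff_zero e 0, hdeg, ?_, ?_⟩
  · rw [Nat.add_sub_cancel, ← hdeg, ← leadingCoeff, hlead]
  · rw [A_succ, ← qPochShift_zero_left, ascentSeries_mul_qPochShift]
end

section
/- For every positive integer d there exists a polynomial α_d ∈ ℤ[x₁, …, x_d] of degree at most d − 1 in each variable, with constant term α_d(0, …, 0) = 1 and with the coefficient of (x₁ x₂ ⋯ x_d)^{d−1} equal to (−1)^{d−1}, such that the identity of multivariate formal power series A_d(x₁, …, x_d) · ∏_{r=1}^{d} (1 − x₁ x₂ ⋯ x_r) = α_d(x₁, …, x_d) holds. -/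
/-!
Index the variables by `0, …, d-1` and call `f` admissible when `f (i+1) ≤ f i + 1`. Expanding
the product, the coefficient of `x^m` in `A_d · ∏_r (1 - x₀ ⋯ x_r)` is
`∑_S (-1)^|S| [E_S ≤ m and m - E_S is admissible]`, where `E_S i = #{r ∈ S | i ≤ r}`.
If some `m_i ≥ d`, let `t` be the last such index. For `t ∉ S` we have `E_S t ≤ d - 1 - t`,
so `(m - E_S) t ≥ t + 1`, and admissibility propagates this down to `(m - E_S) i ≥ 1` for all
`i ≤ t`; hence the terms of `S` and `insert t S` survive together and cancel. So the product is a
polynomial of degree `≤ d - 1` in each variable. For `m = 0` only `S = ∅` contributes, and for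
`m = (d-1, …, d-1)` exactly the proper subsets do, which gives `(-1)^(d-1)`.
-/

open scoped Classical

/-- `Amv d` is the multivariate formal power series
`A_d(x₁, …, x_d) = ∑_{k₁≥0} ∑_{k₂=0}^{k₁+1} ⋯ ∑_{k_d=0}^{k_{d-1}+1} x₁^{k₁} ⋯ x_d^{k_d}`:
the coefficient of `x₁^{k₁}⋯x_d^{k_d}` is `1` if `k_j ≤ k_{j-1} + 1` for all
`j ∈ {2, …, d}` and `0` otherwise. -/
noncomputable def Amv (d : ℕ) : MvPowerSeries (Fin d) ℤ := fun m =>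
  if ∀ i : Fin d, ∀ h : i.val + 1 < d, m ⟨i.val + 1, h⟩ ≤ m i + 1 then 1 else 0

open Finset MvPowerSeries

namespace MvPowerSeries

variable {ι σ R : Type*}

theorem prod_one_sub_monomial [CommRing R] [DecidableEq ι] (s : Finset ι)
    (e : ι → σ →₀ ℕ) :
    ∏ r ∈ s, (1 - monomial (e r) (1 : R)) =
      ∑ T ∈ s.powerset, monomial (∑ r ∈ T, e r) ((-1) ^ #T) := by
  simp_rw [sub_eq_neg_add, ← map_neg, prod_add, prod_const_one, mul_one, prod_monomial,
    prod_const]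

theorem degreeOf_trunc'_le [CommSemiring R] [DecidableEq σ] (n : σ →₀ ℕ)
    (φ : MvPowerSeries σ R) (i : σ) :
    (trunc' R n φ).degreeOf i ≤ n i := by
  refine MvPolynomial.degreeOf_le_iff.mpr fun m hm => ?_
  rw [MvPolynomial.mem_support_iff, coeff_trunc'] at hm
  exact (of_not_not fun h => hm (if_neg h)) i

theorem coe_trunc'_of_coeff_eq_zero [CommSemiring R] [DecidableEq σ] {n : σ →₀ ℕ}
    {φ : MvPowerSeries σ R} (h : ∀ m, ¬ m ≤ n → coeff m φ = 0) :
    (trunc' R n φ : MvPowerSeries σ R) = φ := by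
  ext m
  rw [MvPolynomial.coeff_coe, coeff_trunc']
  split_ifs with hm
  exacts [rfl, (h m hm).symm]

end MvPowerSeries

namespace Amv

variable {d : ℕ}

def Admissible (f : Fin d → ℕ) : Prop :=
  ∀ i : Fin d, ∀ h : i.val + 1 < d, f ⟨i.val + 1, h⟩ ≤ f i + 1

theorem coeff_eq (m : Fin d →₀ ℕ) : coeff m (Amv d) = if Admissible m then 1 else 0 := by
  rw [coeff_apply]
  exact if_congr Iff.rfl rfl rfl

theorem Admissible.apply_add_le {f : Fin d → ℕ} (hf : Admissible f) (i : Fin d) :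
    ∀ (k : ℕ) (h : i.val + k < d), f ⟨i.val + k, h⟩ ≤ f i + k
  | 0, _ => le_rfl
  | k + 1, h => (hf ⟨i.val + k, by omega⟩ h).trans (by
      have := hf.apply_add_le i k (by omega)
      omega)

theorem Admissible.add_of_antitone {f g : Fin d → ℕ} (hf : Admissible f) (hg : Antitone g) :
    Admissible (f + g) := fun i h => by
  have hg_succ := hg (show i ≤ ⟨i.val + 1, h⟩ from Fin.le_def.mpr (by simp))
  have := hf i h
  simp only [Pi.add_apply]
  omega

noncomputable def stairStep (r : Fin d) : Fin d →₀ ℕ :=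
  ∑ i ∈ univ.filter (fun i => i ≤ r), Finsupp.single i 1

theorem stairStep_apply (r i : Fin d) : stairStep r i = if i ≤ r then 1 else 0 := by
  simp [stairStep, Finsupp.single_apply]

theorem stairStep_antitone (r : Fin d) : Antitone ⇑(stairStep r) := fun i j hij => by
  simp only [stairStep_apply]
  split_ifs <;> omega

theorem prod_X_eq_monomial_stairStep (r : Fin d) :
    ∏ i ∈ univ.filter (fun i => i ≤ r), (X i : MvPowerSeries (Fin d) ℤ) =
      monomial (stairStep r) 1 := by
  simp only [X_def, prod_monomial, prod_const_one, stairStep]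

theorem Admissible.tsub_stairStep {f : Fin d → ℕ} (hf : Admissible f) {t : Fin d}
    (ht : ∀ h : t.val + 1 < d, f ⟨t.val + 1, h⟩ ≤ f t) :
    Admissible (f - ⇑(stairStep t)) := by
  intro j h
  have := hf j h
  simp only [Pi.sub_apply, stairStep_apply, Fin.le_def]
  rcases eq_or_ne j t with rfl | hjt
  · have := ht h
    split_ifs <;> omega
  · have := Fin.val_ne_of_ne hjt
    split_ifs <;> omega

noncomputable def stairExp (S : Finset (Fin d)) : Fin d →₀ ℕ :=
  ∑ r ∈ S, stairStep r

theorem stairExp_apply (S : Finset (Fin d)) (i : Fin d) :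
    stairExp S i = ∑ r ∈ S, if i ≤ r then 1 else 0 := by
  simp only [stairExp, Finsupp.coe_finsetSum, Finset.sum_apply, stairStep_apply]

theorem stairExp_insert {S : Finset (Fin d)} {t : Fin d} (ht : t ∉ S) :
    stairExp (insert t S) = stairStep t + stairExp S :=
  sum_insert ht

theorem stairExp_apply_le_card (S : Finset (Fin d)) (i : Fin d) : stairExp S i ≤ #S := by
  rw [stairExp_apply, card_eq_sum_ones]
  exact sum_le_sum fun r _ => by split_ifs <;> omega

theorem stairExp_apply_zero (S : Finset (Fin d)) (hd : 0 < d) : stairExp S ⟨0, hd⟩ = #S := by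
  rw [stairExp_apply, card_eq_sum_ones]
  exact sum_congr rfl fun r _ => if_pos (Fin.le_def.mpr r.val.zero_le)

theorem stairExp_apply_eq_add (S : Finset (Fin d)) (j : Fin d) (h : j.val + 1 < d) :
    stairExp S j = stairExp S ⟨j.val + 1, h⟩ + if j ∈ S then 1 else 0 := by
  rw [stairExp_apply, stairExp_apply, ← sum_ite_eq' S j (fun _ => 1), ← sum_add_distrib]
  refine sum_congr rfl fun r _ => ?_
  simp only [Fin.le_def, ← Fin.val_inj]
  split_ifs <;> omega

theorem stairExp_apply_add_lt {S : Finset (Fin d)} {t : Fin d} (ht : t ∉ S) :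
    stairExp S t + t.val < d := by
  have hsub : S.filter (fun r => t ≤ r) ⊆ (Ici t).erase t := fun r hr => by
    simp only [mem_filter] at hr
    exact mem_erase.mpr ⟨fun h => ht (h ▸ hr.1), mem_Ici.mpr hr.2⟩
  have := card_le_card hsub
  rw [card_erase_of_mem (mem_Ici.mpr le_rfl), Fin.card_Ici, card_filter] at this
  rw [stairExp_apply]
  omega

theorem stairExp_eq_zero_iff {S : Finset (Fin d)} : stairExp S = 0 ↔ S = ∅ := by
  refine ⟨fun h => eq_empty_of_forall_notMem fun r hr => ?_, fun h => h ▸ sum_empty⟩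
  have := single_le_sum (f := fun r' => if r ≤ r' then 1 else 0) (by simp) hr
  simp only [le_refl, if_true, ← stairExp_apply, h, Finsupp.coe_zero, Pi.zero_apply] at this
  omega

def Fits (S : Finset (Fin d)) (m : Fin d →₀ ℕ) : Prop :=
  stairExp S ≤ m ∧ Admissible ⇑(m - stairExp S)

noncomputable def signedFitCount (m : Fin d →₀ ℕ) : ℤ :=
  ∑ S ∈ univ.powerset, if Fits S m then (-1) ^ #S else 0

theorem coeff_mul_prod (m : Fin d →₀ ℕ) :
    coeff m (Amv d * ∏ r : Fin d,
        (1 - ∏ i ∈ univ.filter (fun i : Fin d => i ≤ r), X i)) = signedFitCount m := by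
  simp only [prod_X_eq_monomial_stairStep, prod_one_sub_monomial, mul_sum, map_sum,
    coeff_mul_monomial, coeff_eq, signedFitCount, Fits]
  refine sum_congr rfl fun S _ => ?_
  rw [← stairExp]
  split_ifs <;> simp_all

theorem fits_insert_iff {S : Finset (Fin d)} {t : Fin d} {m : Fin d →₀ ℕ} (htS : t ∉ S)
    (ht : d ≤ m t) (hdesc : ∀ h : t.val + 1 < d, m ⟨t.val + 1, h⟩ ≤ m t) :
    Fits (insert t S) m ↔ Fits S m := by
  rw [Fits, Fits, stairExp_insert htS]
  constructor
  · rintro ⟨hle, hadm⟩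
    have hle' : stairExp S ≤ m := le_add_self.trans hle
    refine ⟨hle', ?_⟩
    convert hadm.add_of_antitone (stairStep_antitone t) using 1
    ext i
    have := hle i
    simp only [Finsupp.coe_tsub, Finsupp.coe_add, Pi.sub_apply, Pi.add_apply] at this ⊢
    omega
  · rintro ⟨hle, hadm⟩
    have hpos : ∀ i ≤ t, stairExp S i < m i := fun i hi => by
      have hit : i.val ≤ t.val := hi
      have hlast := hadm.apply_add_le i (t.val - i.val) (by omega)
      simp only [show i.val + (t.val - i.val) = t.val by omega, Fin.eta, Finsupp.coe_tsub,
        Pi.sub_apply] at hlast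
      have := stairExp_apply_add_lt htS
      have := hle t
      omega
    refine ⟨fun i => ?_, ?_⟩
    · have := hle i
      have := hpos i
      simp only [Finsupp.coe_add, Pi.add_apply, stairStep_apply]
      split_ifs <;> omega
    · rw [add_comm, ← tsub_tsub, Finsupp.coe_tsub]
      refine hadm.tsub_stairStep fun h => ?_
      have := stairExp_apply_eq_add S t h
      have := hdesc h
      simp only [if_neg htS, Finsupp.coe_tsub, Pi.sub_apply] at *
      omega

theorem signedFitCount_eq_zero {m : Fin d →₀ ℕ} {i : Fin d} (hi : d ≤ m i) :
    signedFitCount m = 0 := by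
  set T := univ.filter (fun j : Fin d => d ≤ m j)
  have hT : T.Nonempty := ⟨i, mem_filter.mpr ⟨mem_univ i, hi⟩⟩
  set t := T.max' hT
  have ht : d ≤ m t := (mem_filter.mp (T.max'_mem hT)).2
  have hdesc : ∀ h : t.val + 1 < d, m ⟨t.val + 1, h⟩ ≤ m t := fun h => by
    have : ¬ d ≤ m ⟨t.val + 1, h⟩ := fun hd =>
      (T.le_max' _ (mem_filter.mpr ⟨mem_univ _, hd⟩)).not_gt (Fin.lt_def.mpr t.val.lt_succ_self)
    omega
  rw [signedFitCount, ← insert_erase (mem_univ t), sum_powerset_insert (notMem_erase t univ),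
    ← sum_add_distrib]
  refine sum_eq_zero fun S hS => ?_
  have htS : t ∉ S := fun h => notMem_erase t univ (mem_powerset.mp hS h)
  rw [fits_insert_iff htS ht hdesc, card_insert_of_notMem htS, pow_succ]
  split_ifs <;> ring

theorem signedFitCount_zero : signedFitCount (0 : Fin d →₀ ℕ) = 1 := by
  rw [signedFitCount, sum_eq_single_of_mem ∅ (empty_mem_powerset _)]
  · simp [Fits, stairExp, Admissible]
  · rintro S - hS
    refine if_neg fun ⟨hle, _⟩ => hS (stairExp_eq_zero_iff.mp (le_zero_iff.mp hle))

theorem signedFitCount_const (hd : 0 < d) :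
    signedFitCount (Finsupp.equivFunOnFinite.symm fun _ : Fin d => d - 1) = (-1) ^ (d - 1) := by
  set D : Fin d →₀ ℕ := Finsupp.equivFunOnFinite.symm fun _ => d - 1
  have hD (i : Fin d) : D i = d - 1 := rfl
  have hfits (S : Finset (Fin d)) : Fits S D ↔ S ≠ univ := by
    constructor
    · rintro ⟨hle, -⟩ rfl
      have := hle ⟨0, hd⟩
      rw [stairExp_apply_zero _ hd, card_univ, Fintype.card_fin, hD] at this
      omega
    · intro hS
      have hcard := (card_lt_iff_ne_univ S).mpr hS
      rw [Fintype.card_fin] at hcard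
      have hle : stairExp S ≤ D := fun i => by
        have := stairExp_apply_le_card S i
        rw [hD]
        omega
      refine ⟨hle, fun j h => ?_⟩
      have := stairExp_apply_eq_add S j h
      have := hle j
      simp only [Finsupp.coe_tsub, Pi.sub_apply, hD]
      split_ifs at * <;> omega
  obtain ⟨k, rfl⟩ : ∃ k, d = k + 1 := ⟨d - 1, by omega⟩
  simp only [signedFitCount, hfits, ← sum_filter, filter_ne',
    sum_erase_eq_sub (mem_powerset_self _), sum_powerset_neg_one_pow_card_of_nonempty univ_nonempty,
    card_univ, Fintype.card_fin, Nat.add_sub_cancel]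
  ring

end Amv

/-- **Lemma.** For every positive integer `d` there is a polynomial
`α_d ∈ ℤ[x₁, …, x_d]` of degree at most `d - 1` in each variable, with constant term
`1` and coefficient of `(x₁ x₂ ⋯ x_d)^{d-1}` equal to `(-1)^{d-1}`, such that
`A_d(x₁, …, x_d) · ∏_{r=1}^{d} (1 - x₁ x₂ ⋯ x_r) = α_d(x₁, …, x_d)`. -/
theorem Amv_denominator (d : ℕ) (hd : 0 < d) :
    ∃ α : MvPolynomial (Fin d) ℤ,
      (∀ i : Fin d, α.degreeOf i ≤ d - 1) ∧
      MvPolynomial.coeff 0 α = 1 ∧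
      MvPolynomial.coeff (Finsupp.equivFunOnFinite.symm fun _ : Fin d => d - 1) α = (-1) ^ (d - 1) ∧
      Amv d * (∏ r : Fin d,
          (1 - ∏ i ∈ Finset.univ.filter (fun i : Fin d => i ≤ r), MvPowerSeries.X i)) =
        (α : MvPowerSeries (Fin d) ℤ) := by
  set F := Amv d * ∏ r : Fin d,
    (1 - ∏ i ∈ Finset.univ.filter (fun i : Fin d => i ≤ r), MvPowerSeries.X i)
  set D : Fin d →₀ ℕ := Finsupp.equivFunOnFinite.symm fun _ => d - 1
  have hF (n : Fin d →₀ ℕ) : coeff n F = Amv.signedFitCount n := Amv.coeff_mul_prod n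
  have hF_vanish (n : Fin d →₀ ℕ) (hn : ¬ n ≤ D) : coeff n F = 0 := by
    obtain ⟨i, hi⟩ := not_forall.mp hn
    exact (hF n).trans (Amv.signedFitCount_eq_zero (i := i) (by simp [D] at hi; omega))
  refine ⟨trunc' ℤ D F, degreeOf_trunc'_le D F, ?_, ?_,
    (coe_trunc'_of_coeff_eq_zero hF_vanish).symm⟩
  · rw [coeff_trunc', if_pos zero_le, hF, Amv.signedFitCount_zero]
  · rw [coeff_trunc', if_pos le_rfl, hF, Amv.signedFitCount_const hd]
end

section
/- Fix a positive integer d. As n → ∞, a_d(n) = (1/d!) · n^{d−1}/(d−1)! + O(n^{d−2}); that is, there exists a constant C > 0 such that |a_d(n) − n^{d−1}/(d! (d−1)!)| ≤ C · n^{d−2} for all n ≥ 1. -/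
namespace AdAux
open Finset Equiv

variable {d n : ℕ}

/-- all tuples summing to n -/
def U (d n : ℕ) : Finset (Fin d → Fin (n + 1)) :=
  Finset.univ.filter fun t => (∑ i, (t i : ℕ)) = n

/-- the constrained tuples -/
def S (d n : ℕ) : Finset (Fin d → Fin (n + 1)) :=
  (Finset.univ : Finset (Fin d → Fin (n + 1))).filter fun t =>
    (∑ i, (t i : ℕ)) = n ∧
    ∀ i : Fin d, ∀ h : i.val + 1 < d, (t ⟨i.val + 1, h⟩ : ℕ) ≤ (t i : ℕ) + 1

lemma a_eq (d n : ℕ) : a d n = (S d n).card := rfl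

/-- decreasing tuples summing to n -/
def D (d n : ℕ) : Finset (Fin d → Fin (n + 1)) :=
  (U d n).filter fun t => ∀ i j : Fin d, i ≤ j → t j ≤ t i

lemma mem_U {t : Fin d → Fin (n + 1)} : t ∈ U d n ↔ (∑ i, (t i : ℕ)) = n := by
  simp [U]

lemma mem_D {t : Fin d → Fin (n + 1)} :
    t ∈ D d n ↔ (∑ i, (t i : ℕ)) = n ∧ Antitone t := by
  constructor
  · rintro ht
    simp only [D, mem_filter, mem_U] at ht
    exact ⟨ht.1, fun i j hij => ht.2 i j hij⟩
  · rintro ⟨h1, h2⟩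
    simp only [D, mem_filter, mem_U]
    exact ⟨h1, fun i j hij => h2 hij⟩

/-- adjacent decrease implies antitone -/
lemma antitone_of_adj {α : Type*} [Preorder α] (t : Fin d → α)
    (h : ∀ j (hj : j + 1 < d), t ⟨j + 1, hj⟩ ≤ t ⟨j, Nat.lt_of_succ_lt hj⟩) :
    Antitone t := by
  intro i j hij
  obtain ⟨k, hk⟩ : ∃ k, j.val = i.val + k := ⟨j.val - i.val, by
    have := hij; rw [Fin.le_def] at this; omega⟩
  clear hij
  induction k generalizing j with
  | zero =>
    have : i = j := Fin.ext (by omega)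
    rw [this]
  | succ k ih =>
    have hlt : i.val + k + 1 < d := by have := j.isLt; omega
    have hj' : j = ⟨i.val + k + 1, hlt⟩ := Fin.ext (by simp only [Fin.val_mk]; omega)
    have step := h (i.val + k) hlt
    have prev := ih (j := ⟨i.val + k, Nat.lt_of_succ_lt hlt⟩) (by simp only [Fin.val_mk])
    rw [hj']
    exact le_trans step prev

lemma not_antitone_adj {α : Type*} [Preorder α] (t : Fin d → α) (h : ¬ Antitone t) :
    ∃ j, ∃ hj : j + 1 < d, ¬ t ⟨j + 1, hj⟩ ≤ t ⟨j, Nat.lt_of_succ_lt hj⟩ := by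
  by_contra hc
  push_neg at hc
  exact h (antitone_of_adj t hc)

end AdAux

namespace AdAux
open Finset Equiv

variable {d n : ℕ} {α : Type*} [LinearOrder α]

/-- decreasing sort of a tuple -/
def sortDesc (f : Fin d → α) : Fin d → α := f ∘ (Fin.revPerm.trans (Tuple.sort f))

lemma antitone_sortDesc (f : Fin d → α) : Antitone (sortDesc f) := by
  have h := Tuple.monotone_sort f
  have hrev : Antitone (Fin.rev : Fin d → Fin d) := fun i j hij => Fin.rev_le_rev.mpr hij
  exact h.comp_antitone hrev

lemma sortDesc_comp_perm (f : Fin d → α) (σ : Equiv.Perm (Fin d)) :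
    sortDesc (f ∘ σ) = sortDesc f := by
  have h := Tuple.comp_perm_comp_sort_eq_comp_sort (f := f) (σ := σ)
  funext i
  have := congrFun h (Fin.rev i)
  simpa [sortDesc] using this

lemma sortDesc_eq_self (f : Fin d → α) (hf : Antitone f) : sortDesc f = f := by
  have hrev : Antitone (Fin.rev : Fin d → Fin d) := fun i j hij => Fin.rev_le_rev.mpr hij
  have hmono : Monotone (f ∘ (Fin.revPerm : Equiv.Perm (Fin d))) := hf.comp hrev
  have h := (Tuple.comp_sort_eq_comp_iff_monotone (f := f) (σ := Fin.revPerm)).mpr hmono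
  funext i
  have := congrFun h.symm (Fin.rev i)
  simpa [sortDesc, Fin.rev_rev] using this

lemma sortDesc_of_comp_antitone (s : Fin d → α) (hs : Antitone s) (σ : Equiv.Perm (Fin d)) :
    sortDesc (s ∘ σ) = s := by
  rw [sortDesc_comp_perm, sortDesc_eq_self _ hs]

/-- sum invariance -/
lemma sum_sortDesc (t : Fin d → Fin (n + 1)) :
    (∑ i, ((sortDesc t i : Fin (n + 1)) : ℕ)) = ∑ i, (t i : ℕ) := by
  have h := Equiv.sum_comp (Fin.revPerm.trans (Tuple.sort t)) (fun i => (t i : ℕ))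
  exact h

lemma sortDesc_mem_D {t : Fin d → Fin (n + 1)} (ht : t ∈ U d n) : sortDesc t ∈ D d n :=
  mem_D.mpr ⟨by rw [sum_sortDesc]; exact mem_U.mp ht, antitone_sortDesc t⟩

lemma comp_perm_mem_U {t : Fin d → Fin (n + 1)} (ht : t ∈ U d n) (σ : Equiv.Perm (Fin d)) :
    t ∘ σ ∈ U d n := by
  rw [mem_U] at ht ⊢
  have h := Equiv.sum_comp σ (fun i => (t i : ℕ))
  exact h.trans ht

lemma card_U_eq_sum_fibers (d n : ℕ) :
    (U d n).card = ∑ s ∈ D d n, ((U d n).filter fun t => sortDesc t = s).card :=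
  Finset.card_eq_sum_card_fiberwise fun t ht => sortDesc_mem_D ht

lemma fiber_card_le (s : Fin d → Fin (n + 1)) :
    ((U d n).filter fun t => sortDesc t = s).card ≤ d.factorial := by
  have hsub : ((U d n).filter fun t => sortDesc t = s) ⊆
      (Finset.univ : Finset (Equiv.Perm (Fin d))).image fun σ : Equiv.Perm (Fin d) => s ∘ ⇑σ := by
    intro t ht
    simp only [mem_filter] at ht
    simp only [mem_image, mem_univ, true_and]
    refine ⟨(Fin.revPerm.trans (Tuple.sort t)).symm, ?_⟩
    rw [← ht.2]
    funext i
    simp [sortDesc]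
  calc ((U d n).filter fun t => sortDesc t = s).card
      ≤ ((Finset.univ : Finset (Equiv.Perm (Fin d))).image fun σ : Equiv.Perm (Fin d) => s ∘ ⇑σ).card :=
        Finset.card_le_card hsub
    _ ≤ (Finset.univ : Finset (Equiv.Perm (Fin d))).card := Finset.card_image_le
    _ = d.factorial := by rw [Finset.card_univ, Fintype.card_perm, Fintype.card_fin]

lemma fiber_card_ge {s : Fin d → Fin (n + 1)} (hs : s ∈ D d n) (hinj : Function.Injective s) :
    d.factorial ≤ ((U d n).filter fun t => sortDesc t = s).card := by
  have hanti : Antitone s := (mem_D.mp hs).2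
  have hsU : s ∈ U d n := mem_U.mpr (mem_D.mp hs).1
  have hsub : (Finset.univ : Finset (Equiv.Perm (Fin d))).image (fun σ : Equiv.Perm (Fin d) => s ∘ ⇑σ) ⊆
      ((U d n).filter fun t => sortDesc t = s) := by
    intro t ht
    simp only [mem_image, mem_univ, true_and] at ht
    obtain ⟨σ, rfl⟩ := ht
    simp only [mem_filter]
    exact ⟨comp_perm_mem_U hsU σ, sortDesc_of_comp_antitone s hanti σ⟩
  have hcard : ((Finset.univ : Finset (Equiv.Perm (Fin d))).image fun σ : Equiv.Perm (Fin d) => s ∘ ⇑σ).card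
      = d.factorial := by
    rw [Finset.card_image_of_injective _ ?_, Finset.card_univ, Fintype.card_perm,
      Fintype.card_fin]
    intro σ τ h
    exact Equiv.ext fun i => hinj (congrFun h i)
  rw [← hcard]
  exact Finset.card_le_card hsub

end AdAux

namespace AdAux
open Finset Equiv

variable {d n : ℕ}

/-- error sets: tuples with an adjacent pair differing by exactly c -/
def E (d n j c : ℕ) : Finset (Fin d → Fin (n + 1)) :=
  (U d n).filter fun t =>
    ∃ h : j + 1 < d, (t ⟨j + 1, h⟩ : ℕ) = (t ⟨j, Nat.lt_of_succ_lt h⟩ : ℕ) + c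

lemma mem_E {t : Fin d → Fin (n + 1)} {j c : ℕ} :
    t ∈ E d n j c ↔ (∑ i, (t i : ℕ)) = n ∧
      ∃ h : j + 1 < d, (t ⟨j + 1, h⟩ : ℕ) = (t ⟨j, Nat.lt_of_succ_lt h⟩ : ℕ) + c := by
  unfold E
  rw [Finset.mem_filter, mem_U]

lemma S_subset (d n : ℕ) :
    S d n ⊆ D d n ∪ (Finset.range d).biUnion (fun j => E d n j 1) := by
  intro t ht
  simp only [S, mem_filter, mem_univ, true_and] at ht
  obtain ⟨hsum, hcon⟩ := ht
  by_cases hA : Antitone t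
  · exact Finset.mem_union_left _ (mem_D.mpr ⟨hsum, hA⟩)
  · obtain ⟨j, hj, hnot⟩ := not_antitone_adj t hA
    refine Finset.mem_union_right _ (Finset.mem_biUnion.mpr ⟨j, ?_, ?_⟩)
    · exact Finset.mem_range.mpr (Nat.lt_of_succ_lt hj)
    · rw [mem_E]
      refine ⟨hsum, hj, ?_⟩
      have h1 := hcon ⟨j, Nat.lt_of_succ_lt hj⟩ hj
      rw [Fin.le_def, not_le] at hnot
      simp only [Fin.val_mk] at h1 hnot ⊢
      omega

lemma Dnoninj_subset (d n : ℕ) :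
    (D d n).filter (fun s => ¬ Function.Injective s) ⊆
      (Finset.range d).biUnion (fun j => E d n j 0) := by
  intro s hs
  simp only [mem_filter] at hs
  obtain ⟨hD, hninj⟩ := hs
  have hanti : Antitone s := (mem_D.mp hD).2
  simp only [Function.Injective, not_forall] at hninj
  obtain ⟨i, k, heq, hne⟩ := hninj
  -- wlog i < k
  have hik : ∃ i k : Fin d, i < k ∧ s i = s k := by
    rcases lt_or_gt_of_ne hne with h | h
    · exact ⟨i, k, h, heq⟩
    · exact ⟨k, i, h, heq.symm⟩
  obtain ⟨i, k, hlt, heq⟩ := hik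
  have hjd : i.val + 1 < d := by
    have h1 : i.val < k.val := hlt
    have := k.isLt
    omega
  refine Finset.mem_biUnion.mpr ⟨i.val, Finset.mem_range.mpr (Nat.lt_of_succ_lt hjd), ?_⟩
  rw [mem_E]
  refine ⟨(mem_D.mp hD).1, hjd, ?_⟩
  have hle1 : s ⟨i.val + 1, hjd⟩ ≤ s ⟨i.val, Nat.lt_of_succ_lt hjd⟩ := by
    apply hanti
    rw [Fin.le_def]
    simp
  have hle2 : s k ≤ s ⟨i.val + 1, hjd⟩ := by
    apply hanti
    rw [Fin.le_def]
    simp only [Fin.val_mk]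
    exact hlt
  have hi : s ⟨i.val, Nat.lt_of_succ_lt hjd⟩ = s i := by congr 1
  rw [Fin.le_def] at hle1 hle2
  have hv : (s i : ℕ) = (s k : ℕ) := by rw [heq]
  rw [hi] at hle1
  omega

end AdAux

namespace AdAux
open Finset Equiv

variable {d n : ℕ}

lemma card_E_le (hd : 2 ≤ d) (n j c : ℕ) : (E d n j c).card ≤ (n + 1) ^ (d - 2) := by
  rcases Nat.lt_or_ge d 3 with hd3 | hd3
  · -- d = 2
    have hd2 : d = 2 := by omega
    subst hd2
    simp only [show (2 : ℕ) - 2 = 0 from rfl, pow_zero]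
    apply Finset.card_le_one.mpr
    intro t ht t' ht'
    rw [mem_E] at ht ht'
    obtain ⟨hsum, hj, heq⟩ := ht
    obtain ⟨hsum', _, heq'⟩ := ht'
    have hj0 : j = 0 := by omega
    subst hj0
    have h2 : (∑ i, (t i : ℕ)) = (t 0 : ℕ) + (t 1 : ℕ) := by
      rw [Fin.sum_univ_two]
    have h2' : (∑ i, (t' i : ℕ)) = (t' 0 : ℕ) + (t' 1 : ℕ) := by
      rw [Fin.sum_univ_two]
    rw [h2] at hsum; rw [h2'] at hsum'
    have e0 : (⟨0, Nat.lt_of_succ_lt hj⟩ : Fin 2) = 0 := rfl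
    have e1 : (⟨0 + 1, hj⟩ : Fin 2) = 1 := rfl
    rw [e0, e1] at heq heq'
    have hv0 : (t 0 : ℕ) = (t' 0 : ℕ) := by omega
    have hv1 : (t 1 : ℕ) = (t' 1 : ℕ) := by omega
    funext i
    have : i = 0 ∨ i = 1 := by omega
    rcases this with rfl | rfl
    · exact Fin.ext hv0
    · exact Fin.ext hv1
  · -- d ≥ 3
    by_cases hjd : j + 1 < d
    case neg =>
      have : E d n j c = ∅ := by
        apply Finset.eq_empty_of_forall_notMem
        intro t ht
        rw [mem_E] at ht
        exact hjd ht.2.choose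
      rw [this]
      simp
    case pos =>
    set aa : Fin d := ⟨j + 1, hjd⟩ with ha
    set jj : Fin d := ⟨j, Nat.lt_of_succ_lt hjd⟩ with hjjdef
    set bb : Fin d := ⟨if j = 0 then 2 else 0, by split <;> omega⟩ with hb
    have hba : bb ≠ aa := by
      rw [hb, ha, Fin.ne_iff_vne]
      simp only [Fin.val_mk]
      split <;> omega
    have hbj : bb ≠ jj := by
      rw [hb, hjjdef, Fin.ne_iff_vne]
      simp only [Fin.val_mk]
      split <;> omega
    have haj : aa ≠ jj := by
      rw [ha, hjjdef, Fin.ne_iff_vne]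
      simp only [Fin.val_mk]
      omega
    -- restriction map
    classical
    have hinj : Set.InjOn (fun (t : Fin d → Fin (n + 1)) =>
        (fun i : {i : Fin d // i ≠ aa ∧ i ≠ bb} => t i.1)) (E d n j c) := by
      intro t ht t' ht' h
      rw [Finset.mem_coe, mem_E] at ht
      rw [Finset.mem_coe, mem_E] at ht'
      obtain ⟨hsum, hw, heq⟩ := ht
      obtain ⟨hsum', hw', heq'⟩ := ht'
      have heqa : (t aa : ℕ) = (t jj : ℕ) + c := heq
      have heqa' : (t' aa : ℕ) = (t' jj : ℕ) + c := heq'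
      have hpt : ∀ i : Fin d, i ≠ aa → i ≠ bb → t i = t' i := by
        intro i h1 h2
        exact congrFun h ⟨i, h1, h2⟩
      have hta : t aa = t' aa := by
        have hjv : (t jj : ℕ) = (t' jj : ℕ) := by
          rw [hpt jj (Ne.symm haj) (Ne.symm hbj)]
        apply Fin.ext
        omega
      have htb : t bb = t' bb := by
        have hsplit : (t bb : ℕ) + ∑ i ∈ Finset.univ.erase bb, (t i : ℕ) = n :=
          (Finset.add_sum_erase Finset.univ (fun x => (t x : ℕ)) (Finset.mem_univ bb)).trans hsum
        have hsplit' : (t' bb : ℕ) + ∑ i ∈ Finset.univ.erase bb, (t' i : ℕ) = n :=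
          (Finset.add_sum_erase Finset.univ (fun x => (t' x : ℕ)) (Finset.mem_univ bb)).trans hsum'
        have hrest : ∑ i ∈ Finset.univ.erase bb, (t i : ℕ)
            = ∑ i ∈ Finset.univ.erase bb, (t' i : ℕ) := by
          apply Finset.sum_congr rfl
          intro i hi
          have hib : i ≠ bb := Finset.ne_of_mem_erase hi
          by_cases hia : i = aa
          · subst hia; rw [hta]
          · rw [hpt i hia hib]
        apply Fin.ext
        omega
      funext i
      by_cases h1 : i = aa
      · subst h1; exact hta
      by_cases h2 : i = bb
      · subst h2; exact htb
      · exact hpt i h1 h2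
    have hcard := Finset.card_le_card_of_injOn _ (fun t _ => Finset.mem_univ _) hinj
    refine hcard.trans ?_
    rw [Finset.card_univ, Fintype.card_fun]
    have hsub : Fintype.card {i : Fin d // i ≠ aa ∧ i ≠ bb} = d - 2 := by
      rw [Fintype.card_subtype]
      have : Finset.univ.filter (fun i : Fin d => i ≠ aa ∧ i ≠ bb)
          = Finset.univ \ {aa, bb} := by
        ext i
        simp [Finset.mem_sdiff, and_comm]
      rw [this, Finset.card_sdiff_of_subset (by intro x _; exact Finset.mem_univ x)]
      rw [Finset.card_univ, Fintype.card_fin]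
      rw [Finset.card_insert_of_notMem (by simpa using hba.symm), Finset.card_singleton]
    rw [hsub, Fintype.card_fin]
end AdAux

namespace AdAux
open Finset Equiv

variable {d n : ℕ}

lemma D_subset_S (d n : ℕ) : D d n ⊆ S d n := by
  intro t ht
  rw [mem_D] at ht
  simp only [S, mem_filter, mem_univ, true_and]
  refine ⟨ht.1, fun i h => ?_⟩
  have := ht.2 (show (⟨i.val, Nat.lt_of_succ_lt h⟩ : Fin d) ≤ ⟨i.val + 1, h⟩ by
    rw [Fin.le_def]; simp)
  rw [Fin.le_def] at this
  have h2 : (⟨i.val, Nat.lt_of_succ_lt h⟩ : Fin d) = i := Fin.ext rfl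
  rw [h2] at this
  omega

lemma U_le_D (d n : ℕ) : (U d n).card ≤ d.factorial * (D d n).card := by
  rw [card_U_eq_sum_fibers]
  calc ∑ s ∈ D d n, ((U d n).filter fun t => sortDesc t = s).card
      ≤ ∑ _s ∈ D d n, d.factorial := Finset.sum_le_sum fun s _ => fiber_card_le s
    _ = d.factorial * (D d n).card := by rw [Finset.sum_const, smul_eq_mul, mul_comm]

lemma sum_E_le (hd : 2 ≤ d) (n c : ℕ) :
    ∑ j ∈ Finset.range d, (E d n j c).card ≤ d * (n + 1) ^ (d - 2) := by
  calc ∑ j ∈ Finset.range d, (E d n j c).card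
      ≤ ∑ _j ∈ Finset.range d, (n + 1) ^ (d - 2) :=
        Finset.sum_le_sum fun j _ => card_E_le hd n j c
    _ = d * (n + 1) ^ (d - 2) := by rw [Finset.sum_const, smul_eq_mul, Finset.card_range]

lemma S_le (hd : 2 ≤ d) (n : ℕ) :
    (S d n).card ≤ (D d n).card + d * (n + 1) ^ (d - 2) := by
  calc (S d n).card
      ≤ ((D d n) ∪ (Finset.range d).biUnion (fun j => E d n j 1)).card :=
        Finset.card_le_card (S_subset d n)
    _ ≤ (D d n).card + ((Finset.range d).biUnion (fun j => E d n j 1)).card :=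
        Finset.card_union_le _ _
    _ ≤ (D d n).card + ∑ j ∈ Finset.range d, (E d n j 1).card := by
        exact Nat.add_le_add_left (Finset.card_biUnion_le) _
    _ ≤ (D d n).card + d * (n + 1) ^ (d - 2) :=
        Nat.add_le_add_left (sum_E_le hd n 1) _

lemma D_le_U (hd : 2 ≤ d) (n : ℕ) :
    d.factorial * (D d n).card ≤ (U d n).card + d.factorial * (d * (n + 1) ^ (d - 2)) := by
  classical
  have hsplit : d.factorial * (D d n).card
      = (∑ s ∈ (D d n).filter (fun s => Function.Injective s), d.factorial)
        + ∑ s ∈ (D d n).filter (fun s => ¬ Function.Injective s), d.factorial := by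
    rw [Finset.sum_filter_add_sum_filter_not, Finset.sum_const, smul_eq_mul, mul_comm]
  rw [hsplit]
  have h1 : (∑ s ∈ (D d n).filter (fun s => Function.Injective s), d.factorial)
      ≤ (U d n).card := by
    rw [card_U_eq_sum_fibers]
    calc ∑ s ∈ (D d n).filter (fun s => Function.Injective s), d.factorial
        ≤ ∑ s ∈ (D d n).filter (fun s => Function.Injective s),
            ((U d n).filter fun t => sortDesc t = s).card := by
          apply Finset.sum_le_sum
          intro s hs
          rw [Finset.mem_filter] at hs
          exact fiber_card_ge hs.1 hs.2
      _ ≤ ∑ s ∈ D d n, ((U d n).filter fun t => sortDesc t = s).card :=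
          Finset.sum_le_sum_of_subset (Finset.filter_subset _ _)
  have h2 : (∑ s ∈ (D d n).filter (fun s => ¬ Function.Injective s), d.factorial)
      ≤ d.factorial * (d * (n + 1) ^ (d - 2)) := by
    rw [Finset.sum_const, smul_eq_mul, mul_comm]
    apply Nat.mul_le_mul_left
    calc ((D d n).filter (fun s => ¬ Function.Injective s)).card
        ≤ ((Finset.range d).biUnion (fun j => E d n j 0)).card :=
          Finset.card_le_card (Dnoninj_subset d n)
      _ ≤ ∑ j ∈ Finset.range d, (E d n j 0).card := Finset.card_biUnion_le
      _ ≤ d * (n + 1) ^ (d - 2) := sum_E_le hd n 0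
  exact Nat.add_le_add h1 h2

lemma sandwich_nat (hd : 2 ≤ d) (n : ℕ) :
    (U d n).card ≤ d.factorial * (S d n).card ∧
    d.factorial * (S d n).card ≤ (U d n).card + d.factorial * (2 * d) * (n + 1) ^ (d - 2) := by
  constructor
  · calc (U d n).card ≤ d.factorial * (D d n).card := U_le_D d n
      _ ≤ d.factorial * (S d n).card :=
        Nat.mul_le_mul_left _ (Finset.card_le_card (D_subset_S d n))
  · calc d.factorial * (S d n).card
        ≤ d.factorial * ((D d n).card + d * (n + 1) ^ (d - 2)) :=
          Nat.mul_le_mul_left _ (S_le hd n)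
      _ = d.factorial * (D d n).card + d.factorial * (d * (n + 1) ^ (d - 2)) := by ring
      _ ≤ ((U d n).card + d.factorial * (d * (n + 1) ^ (d - 2)))
            + d.factorial * (d * (n + 1) ^ (d - 2)) :=
          Nat.add_le_add_right (D_le_U hd n) _
      _ = (U d n).card + d.factorial * (2 * d) * (n + 1) ^ (d - 2) := by ring

end AdAux

namespace AdAux
open Finset

noncomputable def equivNatTup (d n : ℕ) :
    {t : Fin d → Fin (n + 1) // (∑ i, (t i : ℕ)) = n} ≃ {f : Fin d → ℕ // ∑ i, f i = n} where
  toFun t := ⟨fun i => (t.1 i : ℕ), t.2⟩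
  invFun f := ⟨fun i => ⟨f.1 i, by
      have h : f.1 i ≤ ∑ j, f.1 j :=
        Finset.single_le_sum (f := f.1) (fun j _ => Nat.zero_le _) (mem_univ i)
      rw [f.2] at h; omega⟩, f.2⟩
  left_inv t := by ext i; rfl
  right_inv f := by ext i; rfl

lemma card_U {d : ℕ} (hd : 0 < d) (n : ℕ) : (U d n).card = (n + d - 1).choose (d - 1) := by
  have h4 : (d + n - 1).choose n = (n + d - 1).choose (d - 1) := by
    have h5 : (n + d - 1).choose (n + d - 1 - n) = (n + d - 1).choose n :=
      Nat.choose_symm (Nat.le_sub_of_add_le (by omega))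
    have h6 : n + d - 1 - n = d - 1 := by omega
    have h7 : d + n - 1 = n + d - 1 := by omega
    rw [h6] at h5
    rw [h7, ← h5]
  have h1 : (U d n).card = Fintype.card {t : Fin d → Fin (n + 1) // (∑ i, (t i : ℕ)) = n} :=
    (Fintype.card_subtype _).symm
  have h2 : Fintype.card {t : Fin d → Fin (n + 1) // (∑ i, (t i : ℕ)) = n}
      = Fintype.card (Sym (Fin d) n) :=
    Fintype.card_congr ((equivNatTup d n).trans (Sym.equivNatSumOfFintype (Fin d) n).symm)
  have h3 : Fintype.card (Sym (Fin d) n) = (Fintype.card (Fin d) + n - 1).choose n :=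
    Sym.card_sym_eq_choose n
  rw [Fintype.card_fin] at h3
  rw [h1, h2, h3, h4]

lemma factU {d : ℕ} (hd : 0 < d) (n : ℕ) :
    (d - 1).factorial * (U d n).card = (n + d - 1).descFactorial (d - 1) := by
  rw [card_U hd n, Nat.descFactorial_eq_factorial_mul_choose]

lemma descF_low {d : ℕ} (n : ℕ) : n ^ (d - 1) ≤ (n + d - 1).descFactorial (d - 1) := by
  rw [Nat.descFactorial_eq_prod_range]
  calc n ^ (d - 1) = ∏ _i ∈ Finset.range (d - 1), n := by
        rw [Finset.prod_const, Finset.card_range]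
    _ ≤ ∏ i ∈ Finset.range (d - 1), (n + d - 1 - i) := by
        gcongr with i hi
        rw [Finset.mem_range] at hi
        omega

lemma descF_high {d n : ℕ} (hd : 2 ≤ d) (hn : 1 ≤ n) :
    (n + d - 1).descFactorial (d - 1)
      ≤ n ^ (d - 1) + 2 ^ (d - 1) * d ^ (d - 1) * n ^ (d - 2) := by
  set m := d - 1 with hm
  have step1 : (n + d - 1).descFactorial m ≤ (n + d) ^ m :=
    le_trans (Nat.descFactorial_le_pow _ _) (Nat.pow_le_pow_left (by omega) m)
  refine step1.trans ?_
  have hexp : (n + d) ^ m = ∑ k ∈ Finset.range (m + 1), n ^ k * d ^ (m - k) * (m.choose k) :=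
    add_pow n d m
  rw [hexp, Finset.sum_range_succ]
  have hlast : n ^ m * d ^ (m - m) * (m.choose m) = n ^ m := by simp
  rw [hlast]
  have hrest : ∑ k ∈ Finset.range m, n ^ k * d ^ (m - k) * (m.choose k)
      ≤ 2 ^ m * d ^ m * n ^ (m - 1) := by
    calc ∑ k ∈ Finset.range m, n ^ k * d ^ (m - k) * (m.choose k)
        ≤ ∑ k ∈ Finset.range m, n ^ (m - 1) * d ^ m * (m.choose k) := by
          apply Finset.sum_le_sum
          intro k hk
          rw [Finset.mem_range] at hk
          have h1 : n ^ k ≤ n ^ (m - 1) := Nat.pow_le_pow_right hn (by omega)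
          have h2 : d ^ (m - k) ≤ d ^ m := Nat.pow_le_pow_right (by omega) (by omega)
          exact Nat.mul_le_mul (Nat.mul_le_mul h1 h2) (le_refl _)
      _ = n ^ (m - 1) * d ^ m * ∑ k ∈ Finset.range m, m.choose k := by
          rw [Finset.mul_sum]
      _ ≤ n ^ (m - 1) * d ^ m * ∑ k ∈ Finset.range (m + 1), m.choose k := by
          apply Nat.mul_le_mul_left
          exact Finset.sum_le_sum_of_subset (Finset.range_subset_range.mpr (by omega))
      _ = n ^ (m - 1) * d ^ m * 2 ^ m := by rw [Nat.sum_range_choose]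
      _ = 2 ^ m * d ^ m * n ^ (m - 1) := by ring
  have hm1 : m - 1 = d - 2 := by omega
  rw [hm1] at hrest
  omega

lemma pow_succ_le {n k : ℕ} (hn : 1 ≤ n) : (n + 1) ^ k ≤ 2 ^ k * n ^ k := by
  rw [← Nat.mul_pow]
  exact Nat.pow_le_pow_left (by omega) k

/-- the master natural-number estimate, `d ≥ 2`, `n ≥ 1` -/
lemma master_nat {d n : ℕ} (hd : 2 ≤ d) (hn : 1 ≤ n) :
    n ^ (d - 1) ≤ (d - 1).factorial * (d.factorial * (S d n).card) ∧
    (d - 1).factorial * (d.factorial * (S d n).card)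
      ≤ n ^ (d - 1) +
        (2 ^ (d - 1) * d ^ (d - 1)
          + (d - 1).factorial * d.factorial * (2 * d) * 2 ^ (d - 2)) * n ^ (d - 2) := by
  obtain ⟨hlo, hhi⟩ := sandwich_nat hd n
  have hd1 : 0 < d := by omega
  constructor
  · calc n ^ (d - 1) ≤ (n + d - 1).descFactorial (d - 1) := descF_low n
      _ = (d - 1).factorial * (U d n).card := (factU hd1 n).symm
      _ ≤ (d - 1).factorial * (d.factorial * (S d n).card) := Nat.mul_le_mul_left _ hlo
  · calc (d - 1).factorial * (d.factorial * (S d n).card)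
        ≤ (d - 1).factorial * ((U d n).card + d.factorial * (2 * d) * (n + 1) ^ (d - 2)) :=
          Nat.mul_le_mul_left _ hhi
      _ = (d - 1).factorial * (U d n).card
            + (d - 1).factorial * (d.factorial * (2 * d) * (n + 1) ^ (d - 2)) := by ring
      _ ≤ (n ^ (d - 1) + 2 ^ (d - 1) * d ^ (d - 1) * n ^ (d - 2))
            + (d - 1).factorial * (d.factorial * (2 * d) * (2 ^ (d - 2) * n ^ (d - 2))) := by
          apply Nat.add_le_add
          · rw [factU hd1 n]
            exact descF_high hd hn
          · apply Nat.mul_le_mul_left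
            apply Nat.mul_le_mul_left
            exact pow_succ_le hn
      _ = n ^ (d - 1) +
          (2 ^ (d - 1) * d ^ (d - 1)
            + (d - 1).factorial * d.factorial * (2 * d) * 2 ^ (d - 2)) * n ^ (d - 2) := by ring

end AdAux

namespace AdAux
open Finset

lemma a_one (n : ℕ) : a 1 n = 1 := by
  rw [a_eq]
  rw [Finset.card_eq_one]
  refine ⟨fun _ => ⟨n, Nat.lt_succ_self n⟩, ?_⟩
  ext t
  simp only [S, mem_filter, mem_univ, true_and, Finset.mem_singleton]
  constructor
  · rintro ⟨hsum, -⟩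
    funext i
    have hi : i = 0 := Subsingleton.elim i 0
    subst hi
    have h := hsum
    rw [Fin.sum_univ_one] at h
    exact Fin.ext (by simpa using h)
  · rintro rfl
    refine ⟨by rw [Fin.sum_univ_one], fun i h => by omega⟩

end AdAux

/-- **Lemma (leading asymptotics of `a_d(n)`).**
Fix a positive integer `d`. As `n → ∞`,
`a_d(n) = (1/d!) · n^(d-1)/(d-1)! + O(n^(d-2))`. -/
theorem ad_asymptotics (d : ℕ) (hd : 0 < d) :
    ∃ C : ℝ, 0 < C ∧ ∀ n : ℕ, 1 ≤ n →
      |(a d n : ℝ) - (n : ℝ) ^ (d - 1) / ((Nat.factorial d : ℝ) * (Nat.factorial (d - 1) : ℝ))| ≤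
        C * (n : ℝ) ^ ((d : ℤ) - 2) := by
  rcases Nat.lt_or_ge d 2 with hd2 | hd2
  · -- d = 1
    have hd1 : d = 1 := by omega
    subst hd1
    refine ⟨1, one_pos, fun n hn => ?_⟩
    have hn0 : (0 : ℝ) < n := by exact_mod_cast hn
    rw [AdAux.a_one n]
    norm_num
  · -- d ≥ 2
    set K : ℕ := 2 ^ (d - 1) * d ^ (d - 1)
      + (d - 1).factorial * d.factorial * (2 * d) * 2 ^ (d - 2) with hK
    refine ⟨(K : ℝ) + 1, by positivity, fun n hn => ?_⟩
    obtain ⟨hlo, hhi⟩ := AdAux.master_nat hd2 hn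
    have hn0 : (0 : ℝ) < n := by exact_mod_cast hn
    set F : ℝ := (Nat.factorial d : ℝ) * (Nat.factorial (d - 1) : ℝ) with hF
    have hF1 : (1 : ℝ) ≤ F := by
      rw [hF]
      have h1 : (1 : ℕ) ≤ d.factorial := Nat.one_le_iff_ne_zero.mpr (Nat.factorial_ne_zero d)
      have h2 : (1 : ℕ) ≤ (d - 1).factorial :=
        Nat.one_le_iff_ne_zero.mpr (Nat.factorial_ne_zero (d - 1))
      have := Nat.mul_le_mul h1 h2
      calc (1 : ℝ) = ((1 : ℕ) : ℝ) := by norm_num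
        _ ≤ ((d.factorial * (d - 1).factorial : ℕ) : ℝ) := by exact_mod_cast this
        _ = F := by push_cast [hF]; ring
    have hF0 : (0 : ℝ) < F := lt_of_lt_of_le one_pos hF1
    -- cast the nat bounds
    have hAa : a d n = (AdAux.S d n).card := AdAux.a_eq d n
    have hcastlo : ((n : ℝ)) ^ (d - 1) ≤ F * (a d n : ℝ) := by
      have := hlo
      rw [← hAa] at this
      calc ((n : ℝ)) ^ (d - 1) = ((n ^ (d - 1) : ℕ) : ℝ) := by push_cast; ring
        _ ≤ (((d - 1).factorial * (d.factorial * a d n) : ℕ) : ℝ) := by exact_mod_cast this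
        _ = F * (a d n : ℝ) := by push_cast [hF]; ring
    have hcasthi : F * (a d n : ℝ) ≤ (n : ℝ) ^ (d - 1) + (K : ℝ) * (n : ℝ) ^ (d - 2) := by
      have := hhi
      rw [← hAa, ← hK] at this
      calc F * (a d n : ℝ) = (((d - 1).factorial * (d.factorial * a d n) : ℕ) : ℝ) := by
            push_cast [hF]; ring
        _ ≤ ((n ^ (d - 1) + K * n ^ (d - 2) : ℕ) : ℝ) := by exact_mod_cast this
        _ = (n : ℝ) ^ (d - 1) + (K : ℝ) * (n : ℝ) ^ (d - 2) := by push_cast; ring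
    have habs : |F * (a d n : ℝ) - (n : ℝ) ^ (d - 1)| ≤ (K : ℝ) * (n : ℝ) ^ (d - 2) := by
      rw [abs_le]
      constructor
      · have hpos : (0 : ℝ) ≤ (K : ℝ) * (n : ℝ) ^ (d - 2) := by positivity
        linarith
      · linarith
    have hkey : (a d n : ℝ) - (n : ℝ) ^ (d - 1) / F
        = (F * (a d n : ℝ) - (n : ℝ) ^ (d - 1)) / F := by
      field_simp
    have hzpow : (n : ℝ) ^ ((d : ℤ) - 2) = (n : ℝ) ^ (d - 2) := by
      have h1 : ((d : ℤ) - 2) = ((d - 2 : ℕ) : ℤ) := by omega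
      rw [h1, zpow_natCast]
    rw [hzpow, hkey, abs_div, abs_of_pos hF0]
    calc |F * (a d n : ℝ) - (n : ℝ) ^ (d - 1)| / F
        ≤ |F * (a d n : ℝ) - (n : ℝ) ^ (d - 1)| := div_le_self (abs_nonneg _) hF1
      _ ≤ (K : ℝ) * (n : ℝ) ^ (d - 2) := habs
      _ ≤ ((K : ℝ) + 1) * (n : ℝ) ^ (d - 2) := by
          have : (0 : ℝ) ≤ (n : ℝ) ^ (d - 2) := by positivity
          nlinarith
end

section
/- For all integers n > 9: if n = 3m then R_3(n) = 6m² − 15m + 7; if n = 3m + 1 then R_3(n) = 6m² − 11m + 2; and if n = 3m + 2 then R_3(n) = 6m² − 7m − 1. -/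
/-!
Write `c t` for the number of parts `≥ t`. The Durfee triangle has size 3 exactly when
`c 3 ≥ 1`, `c 2 ≥ 2`, `c 1 ≥ 3` but not all of `c 4 ≥ 1`, `c 3 ≥ 2`, `c 2 ≥ 3`, `c 1 ≥ 4`.
Sorting by the first of these four inequalities that fails splits the partitions into four
classes: parts at most 3; one part `≥ 4`, all others at most 2; two parts `≥ 3`, all others 1;
exactly three parts. Each class is in bijection with the lattice points of one of two
triangles, `steepWedge` (`2a + b ≤ n`) and `flatWedge` (`a + b + 2 ≤ n`), taken at `n`, `n`,
`n - 1` and `n - 3` respectively. Translated by `(1, 1)`, `steepWedge n` and `flatWedge n` fill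
`steepWedge (n + 3)` and `flatWedge (n + 2)` except for one row and one point, so the point
counts satisfy linear recurrences, and adding up gives `3 R₃(n) = 2n² - 15n + 21` or
`2n² - 15n + 19` according as `3 ∣ n` or not.
-/

open Finset

namespace Multiset

def countGe (s : Multiset ℕ) (t : ℕ) : ℕ := card (s.filter (t ≤ ·))

theorem countGe_anti (s : Multiset ℕ) {t u : ℕ} (h : t ≤ u) : countGe s u ≤ countGe s t :=
  card_le_card <| monotone_filter_right s fun _ hx => h.trans hx

theorem countGe_le_card (s : Multiset ℕ) (t : ℕ) : countGe s t ≤ card s :=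
  card_le_card (filter_le _ s)

@[simp] theorem countGe_cons (x : ℕ) (s : Multiset ℕ) (t : ℕ) :
    countGe (x ::ₘ s) t = countGe s t + if t ≤ x then 1 else 0 := by
  simp only [countGe, ← countP_eq_card_filter, countP_cons]

@[simp] theorem countGe_add (s s' : Multiset ℕ) (t : ℕ) :
    countGe (s + s') t = countGe s t + countGe s' t := by
  simp only [countGe, filter_add, card_add]

@[simp] theorem countGe_replicate (k x t : ℕ) :
    countGe (replicate k x) t = if t ≤ x then k else 0 := by
  induction k with
  | zero => simp [countGe]
  | succ k ih => rw [replicate_succ, countGe_cons, ih]; split_ifs <;> rfl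

@[simp] theorem countGe_singleton (x t : ℕ) : countGe {x} t = if t ≤ x then 1 else 0 := by
  simpa using countGe_replicate 1 x t

theorem eq_filter_add_replicate_one {s : Multiset ℕ} (hs : ∀ x ∈ s, 0 < x) :
    s = s.filter (2 ≤ ·) + replicate (count 1 s) 1 := by
  ext b
  have h0 : count 0 s = 0 := count_eq_zero.2 fun h => (hs 0 h).false
  rcases b with _ | _ | b <;> simp [count_replicate, h0]

theorem eq_filter_add_replicate_two_add_replicate_one {s : Multiset ℕ} (hs : ∀ x ∈ s, 0 < x) :
    s = s.filter (3 ≤ ·) + (replicate (count 2 s) 2 + replicate (count 1 s) 1) := by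
  ext b
  have h0 : count 0 s = 0 := count_eq_zero.2 fun h => (hs 0 h).false
  rcases b with _ | _ | _ | b <;> simp [count_replicate, h0]

theorem exists_eq_pair_of_card_eq_two {s : Multiset ℕ} (h : card s = 2) :
    ∃ u v, v ≤ u ∧ s = {u, v} := by
  obtain ⟨a, b, rfl⟩ := card_eq_two.1 h
  rcases le_total b a with hba | hab
  · exact ⟨a, b, hba, rfl⟩
  · exact ⟨b, a, hab, pair_comm a b⟩

theorem exists_eq_triple_of_card_eq_three {s : Multiset ℕ} (h : card s = 3) :
    ∃ x y z, z ≤ y ∧ y ≤ x ∧ s = {x, y, z} := by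
  have hsorted := pairwise_sort s (· ≥ ·)
  have hs := sort_eq s (· ≥ ·)
  have hlen : (sort s (· ≥ ·)).length = 3 := (length_sort _).trans h
  match hl : sort s (· ≥ ·), hlen with
  | [x, y, z], _ =>
    rw [hl] at hsorted hs
    rw [List.pairwise_cons, List.pairwise_cons] at hsorted
    exact ⟨x, y, z, hsorted.2.1 z (by simp), hsorted.1 y (by simp), hs.symm⟩

end Multiset

theorem Nat.Partition.card_filter_parts_eq_card {n : ℕ} {α : Type*} (P : Multiset ℕ → Prop)
    [DecidablePred P] (T : Finset α) (f : α → Multiset ℕ)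
    (hf : ∀ q ∈ T, (∀ x ∈ f q, 0 < x) ∧ (f q).sum = n ∧ P (f q)) (hinj : Set.InjOn f T)
    (hsurj : ∀ p : n.Partition, P p.parts → ∃ q ∈ T, f q = p.parts) :
    #{p : n.Partition | P p.parts} = #T := by
  symm
  refine card_bij (fun q hq => ⟨f q, fun hx => (hf q hq).1 _ hx, (hf q hq).2.1⟩) ?_ ?_ ?_
  · intro q hq
    simpa using (hf q hq).2.2
  · intro q hq q' hq' h
    exact hinj hq hq' (congrArg Nat.Partition.parts h)
  · intro p hp
    obtain ⟨q, hq, h⟩ := hsurj p (mem_filter.1 hp).2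
    exact ⟨q, hq, Nat.Partition.ext h⟩

section DurfeeTriangle

open Multiset

theorem triangleFits.mono {s : Multiset ℕ} {k l : ℕ} (hlk : l ≤ k) (h : triangleFits s k) :
    triangleFits s l := by
  intro j hj
  rw [Finset.mem_Icc] at hj
  have := h (j + (k - l)) (Finset.mem_Icc.2 ⟨by omega, by omega⟩)
  rw [show k + 1 - (j + (k - l)) = l + 1 - j by omega] at this
  omega

theorem triangleFits.le_card {s : Multiset ℕ} {k : ℕ} (h : triangleFits s k) :
    k ≤ card s := by
  rcases Nat.eq_zero_or_pos k with rfl | hk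
  · exact Nat.zero_le _
  · have := h k (Finset.mem_Icc.2 ⟨hk, le_rfl⟩)
    rw [Nat.add_sub_cancel_left] at this
    exact this.trans (countGe_le_card s 1)

theorem durfeeTriangleSize_eq_iff {s : Multiset ℕ} {k : ℕ} :
    durfeeTriangleSize s = k ↔ triangleFits s k ∧ ¬ triangleFits s (k + 1) := by
  rw [durfeeTriangleSize, Nat.findGreatest_eq_iff]
  constructor
  · rintro ⟨-, hfits, hmax⟩
    refine ⟨?_, fun h => hmax (Nat.lt_succ_self k) h.le_card h⟩
    rcases Nat.eq_zero_or_pos k with rfl | hk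
    · simp [triangleFits]
    · exact hfits hk.ne'
  · rintro ⟨hfits, hnot⟩
    exact ⟨hfits.le_card, fun _ => hfits, fun l hl _ h => hnot (h.mono hl)⟩

theorem triangleFits_three_iff {s : Multiset ℕ} :
    triangleFits s 3 ↔ 1 ≤ countGe s 3 ∧ 2 ≤ countGe s 2 ∧ 3 ≤ countGe s 1 := by
  simp [triangleFits, show Finset.Icc 1 3 = {1, 2, 3} by rfl, countGe]

theorem triangleFits_four_iff {s : Multiset ℕ} :
    triangleFits s 4 ↔
      1 ≤ countGe s 4 ∧ 2 ≤ countGe s 3 ∧ 3 ≤ countGe s 2 ∧ 4 ≤ countGe s 1 := by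
  simp [triangleFits, show Finset.Icc 1 4 = {1, 2, 3, 4} by rfl, countGe]

abbrev PartsLeThree (s : Multiset ℕ) : Prop :=
  countGe s 4 = 0 ∧ 1 ≤ countGe s 3 ∧ 2 ≤ countGe s 2 ∧ 3 ≤ countGe s 1

abbrev OnePartGeThree (s : Multiset ℕ) : Prop :=
  1 ≤ countGe s 4 ∧ countGe s 3 = 1 ∧ 2 ≤ countGe s 2 ∧ 3 ≤ countGe s 1

abbrev TwoPartsGeTwo (s : Multiset ℕ) : Prop :=
  1 ≤ countGe s 4 ∧ 2 ≤ countGe s 3 ∧ countGe s 2 = 2 ∧ 3 ≤ countGe s 1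

abbrev ThreeParts (s : Multiset ℕ) : Prop :=
  1 ≤ countGe s 4 ∧ 2 ≤ countGe s 3 ∧ 3 ≤ countGe s 2 ∧ countGe s 1 = 3

theorem durfeeTriangleSize_eq_three_iff {s : Multiset ℕ} :
    durfeeTriangleSize s = 3 ↔
      PartsLeThree s ∨ OnePartGeThree s ∨ TwoPartsGeTwo s ∨ ThreeParts s := by
  rw [durfeeTriangleSize_eq_iff, triangleFits_three_iff, triangleFits_four_iff]
  have h43 := countGe_anti s (show 3 ≤ 4 by norm_num)
  have h32 := countGe_anti s (show 2 ≤ 3 by norm_num)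
  have h21 := countGe_anti s (show 1 ≤ 2 by norm_num)
  omega

end DurfeeTriangle

theorem card_eq_card_add_card_of_shift {S T B : Finset (ℕ × ℕ)}
    (hS : ∀ a b, (a, b) ∈ S ↔ (a, b) ∈ B ∨ (1 ≤ a ∧ 1 ≤ b ∧ (a - 1, b - 1) ∈ T))
    (hB : ∀ a b, (a + 1, b + 1) ∈ B → (a, b) ∉ T) :
    #S = #T + #B := by
  have hBS : B ⊆ S := fun q hq => (hS q.1 q.2).2 (Or.inl hq)
  rw [← card_filter_add_card_filter_not (· ∈ B), filter_mem_eq_inter, inter_eq_right.2 hBS,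
    add_comm]
  congr 1
  refine card_nbij' (fun q => (q.1 - 1, q.2 - 1)) (fun q => (q.1 + 1, q.2 + 1)) ?_ ?_ ?_ ?_
  · rintro ⟨a, b⟩ h
    rw [mem_coe, mem_filter, hS] at h
    exact (h.1.resolve_left h.2).2.2
  · rintro ⟨a, b⟩ h
    rw [mem_coe] at h
    rw [mem_coe, mem_filter, hS]
    simpa using ⟨Or.inr h, (hB a b · h)⟩
  · rintro ⟨a, b⟩ h
    rw [mem_coe, mem_filter, hS] at h
    have := h.1.resolve_left h.2
    simp only [Prod.mk.injEq]
    omega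
  · intro q _
    simp

def steepWedge (n : ℕ) : Finset (ℕ × ℕ) :=
  (range (n + 1) ×ˢ range (n + 1)).filter fun q =>
    1 ≤ q.2 ∧ q.2 ≤ q.1 ∧ 2 ≤ q.1 ∧ 2 * q.1 + q.2 ≤ n

def flatWedge (n : ℕ) : Finset (ℕ × ℕ) :=
  (range (n + 1) ×ˢ range (n + 1)).filter fun q =>
    2 ≤ q.2 ∧ q.2 ≤ q.1 ∧ 3 ≤ q.1 ∧ q.1 + q.2 + 2 ≤ n

@[simp] theorem mem_steepWedge {n a b : ℕ} :
    (a, b) ∈ steepWedge n ↔ 1 ≤ b ∧ b ≤ a ∧ 2 ≤ a ∧ 2 * a + b ≤ n := by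
  simp only [steepWedge, mem_filter, mem_product, mem_range]
  omega

@[simp] theorem mem_flatWedge {n a b : ℕ} :
    (a, b) ∈ flatWedge n ↔ 2 ≤ b ∧ b ≤ a ∧ 3 ≤ a ∧ a + b + 2 ≤ n := by
  simp only [flatWedge, mem_filter, mem_product, mem_range]
  omega

theorem card_steepWedge_add_three {n : ℕ} (hn : 3 ≤ n) :
    #(steepWedge (n + 3)) = #(steepWedge n) + (n / 2 + 1) := by
  rw [card_eq_card_add_card_of_shift (S := steepWedge (n + 3)) (T := steepWedge n)
      (B := insert (2, 2) (Icc 2 (n / 2 + 1) ×ˢ {1}))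
      (fun a b => by simp; omega) (fun a b => by simp; omega),
    card_insert_of_notMem (by simp), card_product, Nat.card_Icc, card_singleton]
  omega

theorem card_flatWedge_add_two {n : ℕ} (hn : 6 ≤ n) :
    #(flatWedge (n + 2)) = #(flatWedge n) + (n - 3) := by
  rw [card_eq_card_add_card_of_shift (S := flatWedge (n + 2)) (T := flatWedge n)
      (B := insert (3, 3) (Icc 3 (n - 2) ×ˢ {2}))
      (fun a b => by simp; omega) (fun a b => by simp; omega),
    card_insert_of_notMem (by simp), card_product, Nat.card_Icc, card_singleton]
  omega

theorem card_steepWedge_add_card_steepWedge {n : ℕ} (hn : 3 ≤ n) :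
    12 * (#(steepWedge n) + #(steepWedge (n + 3)) : ℤ) =
      n ^ 2 + (n + 3) ^ 2 - if 3 ∣ n then 21 else 29 := by
  induction n using Nat.strong_induction_on with
  | _ n ih =>
    rcases lt_or_ge n 6 with hn6 | hn6
    · interval_cases n <;> decide
    · obtain ⟨k, rfl⟩ : ∃ k, n = k + 3 := ⟨n - 3, by omega⟩
      have hk := ih k (by omega) (by omega)
      have hstep : #(steepWedge (k + 6)) = #(steepWedge k) + (k + 3) := by
        rw [card_steepWedge_add_three (by omega), card_steepWedge_add_three (by omega)]
        omega
      rw [hstep]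
      simp only [show 3 ∣ k + 3 ↔ 3 ∣ k by omega]
      push_cast at hk ⊢
      linarith

theorem card_flatWedge_add_card_flatWedge {n : ℕ} (hn : 6 ≤ n) :
    4 * (#(flatWedge n) + #(flatWedge (n + 1)) : ℤ) = (n - 4) ^ 2 + (n - 3) ^ 2 - 9 := by
  induction n, hn using Nat.le_induction with
  | base => decide
  | succ n hn ih =>
    rw [card_flatWedge_add_two hn]
    push_cast [show 3 ≤ n by omega] at ih ⊢
    linarith

section DurfeeThree

open Multiset

theorem card_partsLeThree {n : ℕ} (hn : 7 ≤ n) :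
    #{p : n.Partition | PartsLeThree p.parts} = #(steepWedge n) := by
  refine Nat.Partition.card_filter_parts_eq_card PartsLeThree _
    (fun q : ℕ × ℕ =>
      replicate q.2 3 + replicate (q.1 - q.2) 2 + replicate (n - (2 * q.1 + q.2)) 1)
    ?_ ?_ ?_
  · rintro ⟨i, j⟩ hq
    rw [mem_steepWedge] at hq
    refine ⟨?_, ?_, ?_⟩
    · intro x hx
      simp only [Multiset.mem_add, mem_replicate] at hx
      omega
    · simp [sum_replicate]; omega
    · simp [PartsLeThree]; omega
  · rintro ⟨i, j⟩ hq ⟨i', j'⟩ hq' h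
    have h2 := congrArg (countGe · 2) h
    have h3 := congrArg (countGe · 3) h
    simp at h2 h3
    rw [Finset.mem_coe, mem_steepWedge] at hq hq'
    exact Prod.ext (by omega) (by omega)
  · intro p ⟨h4, h3, h2, h1⟩
    have hthree : p.parts.filter (3 ≤ ·) = replicate (countGe p.parts 3) 3 := by
      refine eq_replicate_card.2 fun x hx => ?_
      rw [Multiset.mem_filter] at hx
      by_contra hx3
      have : 0 < countGe p.parts 4 :=
        card_pos_iff_exists_mem.2 ⟨x, Multiset.mem_filter.2 ⟨hx.1, by omega⟩⟩
      omega
    have hp := eq_filter_add_replicate_two_add_replicate_one fun _ hx => p.parts_pos hx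
    rw [hthree] at hp
    set a := countGe p.parts 3
    set b := count 2 p.parts
    set c := count 1 p.parts
    have hsum := p.parts_sum
    rw [hp] at h2 h1 hsum
    simp [sum_replicate] at h2 h1 hsum
    refine ⟨(a + b, a), mem_steepWedge.2 (by omega), ?_⟩
    rw [hp, add_assoc]
    simp only [show a + b - a = b by omega, show n - (2 * (a + b) + a) = c by omega]

theorem card_onePartGeThree (n : ℕ) :
    #{p : n.Partition | OnePartGeThree p.parts} = #(flatWedge n) := by
  refine Nat.Partition.card_filter_parts_eq_card OnePartGeThree _
    (fun q : ℕ × ℕ =>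
      (n + 2 - q.1 - q.2) ::ₘ (replicate (q.2 - 1) 2 + replicate (q.1 - q.2) 1))
    ?_ ?_ ?_
  · rintro ⟨a, b⟩ hq
    rw [mem_flatWedge] at hq
    refine ⟨?_, ?_, ?_⟩
    · intro x hx
      simp only [Multiset.mem_cons, Multiset.mem_add, mem_replicate] at hx
      omega
    · simp [sum_replicate]; omega
    · simp [OnePartGeThree]
      split_ifs <;> omega
  · rintro ⟨a, b⟩ hq ⟨a', b'⟩ hq' h
    have h1 := congrArg (countGe · 1) h
    have h2 := congrArg (countGe · 2) h
    simp at h1 h2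
    rw [Finset.mem_coe, mem_flatWedge] at hq hq'
    split_ifs at h1 h2 <;> exact Prod.ext (by omega) (by omega)
  · intro p ⟨h4, h3, h2, h1⟩
    obtain ⟨x, hx⟩ := card_eq_one.1 h3
    have hp := eq_filter_add_replicate_two_add_replicate_one fun _ hx => p.parts_pos hx
    rw [hx, Multiset.singleton_add] at hp
    set b := count 2 p.parts
    set c := count 1 p.parts
    have hsum := p.parts_sum
    rw [hp] at h4 h2 h1 hsum
    simp [sum_replicate] at h4 h2 h1 hsum
    have hx4 : 4 ≤ x := by split_ifs at h4 <;> omega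
    simp only [show 2 ≤ x by omega, show 1 ≤ x by omega, if_true] at h2 h1
    refine ⟨(1 + b + c, 1 + b), mem_flatWedge.2 (by omega), ?_⟩
    rw [hp]
    simp only [show n + 2 - (1 + b + c) - (1 + b) = x by omega, show 1 + b - 1 = b by omega,
      show 1 + b + c - (1 + b) = c by omega]

theorem card_twoPartsGeTwo (n : ℕ) :
    #{p : (n + 1).Partition | TwoPartsGeTwo p.parts} = #(flatWedge n) := by
  refine Nat.Partition.card_filter_parts_eq_card TwoPartsGeTwo _
    (fun q : ℕ × ℕ => (q.1 + 1) ::ₘ (q.2 + 1) ::ₘ replicate (n - 1 - q.1 - q.2) 1) ?_ ?_ ?_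
  · rintro ⟨a, b⟩ hq
    rw [mem_flatWedge] at hq
    refine ⟨?_, ?_, ?_⟩
    · intro x hx
      simp only [Multiset.mem_cons, mem_replicate] at hx
      omega
    · simp [sum_replicate]; omega
    · simp [TwoPartsGeTwo]
      split_ifs <;> omega
  · rintro ⟨a, b⟩ hq ⟨a', b'⟩ hq' h
    rw [Finset.mem_coe, mem_flatWedge] at hq hq'
    have hsorted : ∀ a b, b ≤ a →
        ((a + 1) :: (b + 1) :: List.replicate (n - 1 - a - b) 1).Pairwise (· ≥ ·) := by
      intro a b hba
      simp [List.pairwise_replicate, List.mem_replicate]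
      omega
    have hcoe : ((a + 1) :: (b + 1) :: List.replicate (n - 1 - a - b) 1 : Multiset ℕ) =
        ((a' + 1) :: (b' + 1) :: List.replicate (n - 1 - a' - b') 1 : Multiset ℕ) := by
      simpa only [← coe_replicate, cons_coe] using h
    have hlist := (coe_eq_coe.1 hcoe).eq_of_pairwise' (hsorted a b hq.2.1) (hsorted a' b' hq'.2.1)
    simp only [List.cons.injEq, Nat.add_right_cancel_iff] at hlist
    exact Prod.ext hlist.1 hlist.2.1
  · intro p ⟨h4, h3, h2, h1⟩
    obtain ⟨u, v, hvu, huv⟩ := exists_eq_pair_of_card_eq_two h2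
    have hp := eq_filter_add_replicate_one fun _ hx => p.parts_pos hx
    rw [huv] at hp
    set c := count 1 p.parts
    have hsum := p.parts_sum
    rw [hp] at h4 h3 h1 hsum
    simp at h4 h3 h1 hsum
    have hv3 : 3 ≤ v := by split_ifs at h3 <;> omega
    have hu4 : 4 ≤ u := by split_ifs at h4 <;> omega
    simp only [show 1 ≤ v by omega, show 1 ≤ u by omega, if_true] at h1
    refine ⟨(u - 1, v - 1), mem_flatWedge.2 (by omega), ?_⟩
    rw [hp]
    simp only [show u - 1 + 1 = u by omega, show v - 1 + 1 = v by omega,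
      show n - 1 - (u - 1) - (v - 1) = c by omega]
    rfl

theorem card_threeParts {n : ℕ} (hn : 7 ≤ n) :
    #{p : (n + 3).Partition | ThreeParts p.parts} = #(steepWedge n) := by
  refine Nat.Partition.card_filter_parts_eq_card ThreeParts _
    (fun q : ℕ × ℕ => {n + 1 - q.1 - q.2, q.1 + 1, q.2 + 1}) ?_ ?_ ?_
  · rintro ⟨a, b⟩ hq
    rw [mem_steepWedge] at hq
    refine ⟨?_, ?_, ?_⟩
    · intro x hx
      simp only [Multiset.insert_eq_cons, Multiset.mem_cons, Multiset.mem_singleton] at hx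
      omega
    · simp; omega
    · simp [ThreeParts]
      split_ifs <;> omega
  · rintro ⟨a, b⟩ hq ⟨a', b'⟩ hq' h
    rw [Finset.mem_coe, mem_steepWedge] at hq hq'
    have hsorted : ∀ a b, b ≤ a → 2 * a + b ≤ n →
        [n + 1 - a - b, a + 1, b + 1].Pairwise (· ≥ ·) := by
      intro a b hba hab
      simp
      omega
    have hlist := (coe_eq_coe.1 h).eq_of_pairwise' (hsorted a b hq.2.1 hq.2.2.2)
      (hsorted a' b' hq'.2.1 hq'.2.2.2)
    simp only [List.cons.injEq, Nat.add_right_cancel_iff] at hlist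
    exact Prod.ext hlist.2.1 hlist.2.2.1
  · intro p ⟨h4, h3, h2, h1⟩
    have hcard : card p.parts = 3 := by
      rwa [countGe, filter_eq_self.2 fun x hx => Nat.one_le_iff_ne_zero.2 (p.parts_pos hx).ne']
        at h1
    obtain ⟨x, y, z, hzy, hyx, hp⟩ := exists_eq_triple_of_card_eq_three hcard
    have hsum := p.parts_sum
    rw [hp] at h4 h3 h2 hsum
    simp at h4 h3 h2 hsum
    have hz2 : 2 ≤ z := by split_ifs at h2 <;> omega
    have hy3 : 3 ≤ y := by split_ifs at h3 <;> omega
    have hx4 : 4 ≤ x := by split_ifs at h4 <;> omega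
    refine ⟨(y - 1, z - 1), mem_steepWedge.2 (by omega), ?_⟩
    rw [hp]
    simp only [show n + 1 - (y - 1) - (z - 1) = x by omega, show y - 1 + 1 = y by omega,
      show z - 1 + 1 = z by omega]

theorem R_three_add_three {n : ℕ} (hn : 7 ≤ n) :
    R 3 (n + 3) = #(steepWedge (n + 3)) + #(flatWedge (n + 3)) + #(flatWedge (n + 2)) +
      #(steepWedge n) := by
  rw [R, Finset.filter_congr fun p _ => durfeeTriangleSize_eq_three_iff,
    Finset.filter_or, card_union_of_disjoint (Finset.disjoint_filter.2 fun p _ h h' => by omega),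
    Finset.filter_or, card_union_of_disjoint (Finset.disjoint_filter.2 fun p _ h h' => by omega),
    Finset.filter_or, card_union_of_disjoint (Finset.disjoint_filter.2 fun p _ h h' => by omega),
    card_partsLeThree (by omega), card_onePartGeThree, card_twoPartsGeTwo, card_threeParts hn]
  ring

theorem three_mul_R_three {n : ℕ} (hn : 10 ≤ n) :
    3 * (R 3 n : ℤ) = 2 * n ^ 2 - 15 * n + if 3 ∣ n then 21 else 19 := by
  obtain ⟨k, rfl⟩ : ∃ k, n = k + 3 := ⟨n - 3, by omega⟩
  have hsteep := card_steepWedge_add_card_steepWedge (n := k) (by omega)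
  have hflat := card_flatWedge_add_card_flatWedge (n := k + 2) (by omega)
  rw [R_three_add_three (by omega)]
  simp only [show 3 ∣ k + 3 ↔ 3 ∣ k by omega]
  split_ifs at hsteep ⊢ <;> push_cast at hsteep hflat ⊢ <;> linarith

end DurfeeThree

/-- **Example (quasi-polynomial formula for `R_3`).** For all integers `n > 9`:
if `n = 3m` then `R_3(n) = 6m² - 15m + 7`; if `n = 3m + 1` then
`R_3(n) = 6m² - 11m + 2`; if `n = 3m + 2` then `R_3(n) = 6m² - 7m - 1`. -/
theorem R3_quasipolynomial (n m : ℕ) (hn : 9 < n) :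
    (n = 3 * m → (R 3 n : ℤ) = 6 * (m : ℤ) ^ 2 - 15 * (m : ℤ) + 7) ∧
    (n = 3 * m + 1 → (R 3 n : ℤ) = 6 * (m : ℤ) ^ 2 - 11 * (m : ℤ) + 2) ∧
    (n = 3 * m + 2 → (R 3 n : ℤ) = 6 * (m : ℤ) ^ 2 - 7 * (m : ℤ) - 1) := by
  have h := three_mul_R_three hn
  refine ⟨?_, ?_, ?_⟩ <;> rintro rfl
  · rw [if_pos (by omega)] at h
    push_cast at h
    linarith
  · rw [if_neg (by omega)] at h
    push_cast at h
    linarith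
  · rw [if_neg (by omega)] at h
    push_cast at h
    linarith
end
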